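/- arXiv:2208.06181 — 9 statements merged into one kernel-verified Lean document; each statement's English description precedes it below -/
import Mathlib

section
/- The bracket relations [L_α, L_β] = (β−α)L_{α+β} + δ_{α+β,0}(α³−α)/12·C, [L_α, W_β] = (β−α)W_{α+β} + δ_{α+β,0}(α³−α)/12·C, [W_α, W_β] = 0, [·, C] = 0, for α, β ∈ ℤᵏ (viewed as a subgroup of ℂ), satisfy the Jacobi identity and skew-symmetry, hence define a Lie algebra structure on the vector space with basis {L_α, W_α : α ∈ ℤᵏ} ∪ {C}. -/
/-- Basis index set for the high rank `W`-algebra `W(2,2)`: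
`L_α`, `W_α` for `α ∈ ℤᵏ`, and the central element `C`. -/
abbrev WIdx (k : ℕ) := ((Fin k → ℤ) ⊕ (Fin k → ℤ)) ⊕ Unit

/-- The underlying vector space with basis `{L_α, W_α : α ∈ ℤᵏ} ∪ {C}`. -/
abbrev WAlg (k : ℕ) := WIdx k →₀ ℂ

noncomputable def Lb {k : ℕ} (α : Fin k → ℤ) : WAlg k :=
  Finsupp.single (Sum.inl (Sum.inl α)) 1

noncomputable def Wb {k : ℕ} (α : Fin k → ℤ) : WAlg k :=
  Finsupp.single (Sum.inl (Sum.inr α)) 1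

noncomputable def Cb {k : ℕ} : WAlg k := Finsupp.single (Sum.inr ()) 1

/-!
Write `ω(α, β) = δ_{α+β,0} (α³ - α) / 12` (`WAlg.central`). Since `ω` is antisymmetric,
`[W_α, L_β] = -[L_β, W_α]` is given by the same formula `(β - α) W_{α+β} + ω(α, β) C` as
`[L_α, W_β]`, which makes the bracket skew-symmetric on basis vectors. The Jacobiator is invariant
under cyclic permutations and linear in its last argument, hence trilinear, so it suffices to
check that it vanishes on basis vectors. Triples containing `C` or two `W`s give zero outright,
and the remaining ones are `(L, L, L)` and `(L, L, W)` up to rotation. For both, the coefficient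
of `L_{α+β+γ}` resp. `W_{α+β+γ}` is `∑_cyc (γ - β)(β + γ - α) = 0`, and the coefficient of `C`
vanishes by the Virasoro cocycle identity `∑_cyc (γ - β) ω(α, β + γ) = 0`.
-/

open Module

section JacobiOfBasis

variable {ι R M : Type*} [CommRing R] [AddCommGroup M] [Module R M]
  (b : Basis ι R M) (B : M →ₗ[R] M →ₗ[R] M)

theorem LinearMap.apply_eq_neg_apply_of_basis (h : ∀ i j, B (b i) (b j) = - B (b j) (b i))
    (x y : M) : B x y = - B y x := by
  have hB : B = -B.flip := LinearMap.ext_basis b b h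
  exact congr($hB x y)

def LinearMap.jacobiator (x y : M) : M →ₗ[R] M :=
  B x ∘ₗ B y + B y ∘ₗ B.flip x + B.flip (B x y)

theorem LinearMap.jacobiator_apply (x y z : M) :
    B.jacobiator x y z = B x (B y z) + B y (B z x) + B z (B x y) := rfl

theorem LinearMap.jacobiator_apply_rotate (x y z : M) :
    B.jacobiator x y z = B.jacobiator y z x := by
  simp only [LinearMap.jacobiator_apply]
  abel

theorem LinearMap.jacobiator_eq_zero_of_basis
    (h : ∀ i j l, B.jacobiator (b i) (b j) (b l) = 0) (x y : M) : B.jacobiator x y = 0 := by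
  have h₁ : ∀ i j, B.jacobiator (b i) (b j) = 0 := fun i j => b.ext (h i j)
  have h₂ : ∀ y j, B.jacobiator y (b j) = 0 := fun y j => b.ext fun i => by
    rw [B.jacobiator_apply_rotate, h₁, LinearMap.zero_apply, LinearMap.zero_apply]
  refine b.ext fun l => ?_
  rw [B.jacobiator_apply_rotate, h₂, LinearMap.zero_apply, LinearMap.zero_apply]

end JacobiOfBasis

namespace WAlg

variable {k : ℕ} (ε : (Fin k → ℤ) →+ ℂ)

noncomputable def central (α β : Fin k → ℤ) : ℂ :=
  if α + β = 0 then ((ε α) ^ 3 - ε α) / 12 else 0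

theorem central_swap (α β : Fin k → ℤ) : central ε β α = - central ε α β := by
  unfold central
  by_cases h : α + β = 0
  · obtain rfl : β = -α := eq_neg_of_add_eq_zero_right h
    simp only [neg_add_cancel, add_neg_cancel, if_true, map_neg]
    ring
  · rw [if_neg h, if_neg (by rwa [add_comm]), neg_zero]

theorem central_cocycle (α β γ : Fin k → ℤ) :
    (ε γ - ε β) * central ε α (β + γ) + (ε α - ε γ) * central ε β (γ + α)
      + (ε β - ε α) * central ε γ (α + β) = 0 := by
  unfold central
  rw [show β + (γ + α) = α + (β + γ) by abel, show γ + (α + β) = α + (β + γ) by abel]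
  by_cases h : α + (β + γ) = 0
  · have hγ : ε γ = -ε α - ε β := by
      linear_combination (by simpa using congr(ε $h) : ε α + (ε β + ε γ) = 0)
    simp only [if_pos h, hγ]
    ring
  · simp only [if_neg h, mul_zero, add_zero]

noncomputable def bracketBasis : WIdx k → WIdx k → WAlg k
  | .inl (.inl α), .inl (.inl β) => (ε β - ε α) • Lb (α + β) + central ε α β • Cb
  | .inl (.inl α), .inl (.inr β) | .inl (.inr α), .inl (.inl β) =>
      (ε β - ε α) • Wb (α + β) + central ε α β • Cb
  | _, _ => 0

theorem bracketBasis_swap (i j : WIdx k) : bracketBasis ε i j = - bracketBasis ε j i := by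
  rcases i with (α | α) | ⟨⟨⟩⟩ <;> rcases j with (β | β) | ⟨⟨⟩⟩ <;>
    simp only [bracketBasis, neg_zero]
  all_goals rw [central_swap ε α β, add_comm β α]; module

noncomputable abbrev basis (k : ℕ) : Basis (WIdx k) ℂ (WAlg k) := Finsupp.basisSingleOne

theorem basis_inl_inl (α : Fin k → ℤ) : basis k (.inl (.inl α)) = Lb α := by simp [Lb]

theorem basis_inl_inr (α : Fin k → ℤ) : basis k (.inl (.inr α)) = Wb α := by simp [Wb]

theorem basis_inr : basis k (.inr ()) = Cb := by simp [Cb]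

noncomputable def bracket : WAlg k →ₗ[ℂ] WAlg k →ₗ[ℂ] WAlg k :=
  (basis k).constr ℂ fun i => (basis k).constr ℂ (bracketBasis ε i)

theorem bracket_basis (i j : WIdx k) :
    bracket ε (basis k i) (basis k j) = bracketBasis ε i j := by
  simp only [bracket, Basis.constr_basis]

theorem bracket_Lb_Lb (α β : Fin k → ℤ) :
    bracket ε (Lb α) (Lb β) = (ε β - ε α) • Lb (α + β) + central ε α β • Cb :=
  bracket_basis ε (.inl (.inl α)) (.inl (.inl β))

theorem bracket_Lb_Wb (α β : Fin k → ℤ) :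
    bracket ε (Lb α) (Wb β) = (ε β - ε α) • Wb (α + β) + central ε α β • Cb :=
  bracket_basis ε (.inl (.inl α)) (.inl (.inr β))

theorem bracket_Wb_Lb (α β : Fin k → ℤ) :
    bracket ε (Wb α) (Lb β) = (ε β - ε α) • Wb (α + β) + central ε α β • Cb :=
  bracket_basis ε (.inl (.inr α)) (.inl (.inl β))

theorem bracket_Wb_Wb (α β : Fin k → ℤ) : bracket ε (Wb α) (Wb β) = 0 :=
  bracket_basis ε (.inl (.inr α)) (.inl (.inr β))

theorem bracket_Cb_left : bracket ε Cb = 0 :=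
  (basis k).ext fun j => bracket_basis ε (.inr ()) j

theorem bracket_Cb_right (x : WAlg k) : bracket ε x Cb = 0 := by
  have : (bracket ε).flip Cb = 0 := (basis k).ext fun i => by
    rw [LinearMap.flip_apply, LinearMap.zero_apply]
    refine (bracket_basis ε i (.inr ())).trans ?_
    rcases i with (α | α) | ⟨⟨⟩⟩ <;> rfl
  exact congr($this x)

theorem bracket_skew (x y : WAlg k) : bracket ε x y = - bracket ε y x :=
  (bracket ε).apply_eq_neg_apply_of_basis (basis k) (fun i j => by
    simp only [bracket_basis, bracketBasis_swap ε i j]) x y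

theorem jacobiator_Lb_Lb_Lb (α β γ : Fin k → ℤ) :
    (bracket ε).jacobiator (Lb α) (Lb β) (Lb γ) = 0 := by
  simp only [LinearMap.jacobiator_apply, bracket_Lb_Lb, map_add, map_smul, bracket_Cb_right,
    smul_zero, add_zero]
  rw [show β + (γ + α) = α + (β + γ) by abel, show γ + (α + β) = α + (β + γ) by abel]
  linear_combination (norm := module) central_cocycle ε α β γ • (Cb : WAlg k)

theorem jacobiator_Lb_Lb_Wb (α β γ : Fin k → ℤ) :
    (bracket ε).jacobiator (Lb α) (Lb β) (Wb γ) = 0 := by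
  simp only [LinearMap.jacobiator_apply, bracket_Lb_Lb, bracket_Lb_Wb, bracket_Wb_Lb, map_add,
    map_smul, bracket_Cb_right, smul_zero, add_zero]
  rw [show β + (γ + α) = α + (β + γ) by abel, show γ + (α + β) = α + (β + γ) by abel]
  linear_combination (norm := module) central_cocycle ε α β γ • (Cb : WAlg k)

theorem jacobiator_Lb_Wb_Lb (α β γ : Fin k → ℤ) :
    (bracket ε).jacobiator (Lb α) (Wb β) (Lb γ) = 0 := by
  rw [← LinearMap.jacobiator_apply_rotate, jacobiator_Lb_Lb_Wb]

theorem jacobiator_Wb_Lb_Lb (α β γ : Fin k → ℤ) :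
    (bracket ε).jacobiator (Wb α) (Lb β) (Lb γ) = 0 := by
  rw [LinearMap.jacobiator_apply_rotate, jacobiator_Lb_Lb_Wb]

theorem jacobiator_basis (i j l : WIdx k) :
    (bracket ε).jacobiator (basis k i) (basis k j) (basis k l) = 0 := by
  rcases i with (α | α) | ⟨⟨⟩⟩ <;> rcases j with (β | β) | ⟨⟨⟩⟩ <;>
    rcases l with (γ | γ) | ⟨⟨⟩⟩ <;>
    simp only [basis_inl_inl, basis_inl_inr, basis_inr, jacobiator_Lb_Lb_Lb, jacobiator_Lb_Lb_Wb,
      jacobiator_Lb_Wb_Lb, jacobiator_Wb_Lb_Lb] <;>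
    simp [LinearMap.jacobiator_apply, bracket_Lb_Wb, bracket_Wb_Lb, bracket_Wb_Wb,
      bracket_Cb_left, bracket_Cb_right]

end WAlg

theorem stmt0_general (k : ℕ) (ε : (Fin k → ℤ) →+ ℂ) :
    ∃ B : WAlg k →ₗ[ℂ] WAlg k →ₗ[ℂ] WAlg k,
      (∀ α β : Fin k → ℤ, B (Lb α) (Lb β)
          = (ε β - ε α) • Lb (α + β)
            + (if α + β = 0 then ((ε α) ^ 3 - ε α) / 12 else 0) • Cb) ∧
      (∀ α β : Fin k → ℤ, B (Lb α) (Wb β)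
          = (ε β - ε α) • Wb (α + β)
            + (if α + β = 0 then ((ε α) ^ 3 - ε α) / 12 else 0) • Cb) ∧
      (∀ α β : Fin k → ℤ, B (Wb α) (Wb β) = 0) ∧
      (∀ x : WAlg k, B x Cb = 0) ∧
      (∀ x y : WAlg k, B x y = - B y x) ∧
      (∀ x y z : WAlg k, B x (B y z) + B y (B z x) + B z (B x y) = 0) := by
  refine ⟨WAlg.bracket ε, WAlg.bracket_Lb_Lb ε, WAlg.bracket_Lb_Wb ε, WAlg.bracket_Wb_Wb ε,
    WAlg.bracket_Cb_right ε, WAlg.bracket_skew ε, fun x y z => ?_⟩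
  rw [← LinearMap.jacobiator_apply,
    (WAlg.bracket ε).jacobiator_eq_zero_of_basis (WAlg.basis k) (WAlg.jacobiator_basis ε),
    LinearMap.zero_apply]

/-- the bracket relations of the high rank `W`-algebra `W(2,2)` extend to a
bilinear bracket on the free vector space on `{L_α, W_α : α ∈ ℤᵏ} ∪ {C}` which is
skew-symmetric and satisfies the Jacobi identity, hence defines a Lie algebra structure.
Here `ε : ℤᵏ →+ ℂ` is the embedding of `ℤᵏ` as a subgroup of `ℂ` (given by a `ℤ`-basis
`ε₁,…,ε_k` of complex numbers linearly independent over `ℚ`, so `ε` is injective). -/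
theorem stmt0 (k : ℕ) (hk : 0 < k) (ε : (Fin k → ℤ) →+ ℂ)
    (hε : Function.Injective ε) :
    ∃ B : WAlg k →ₗ[ℂ] WAlg k →ₗ[ℂ] WAlg k,
      (∀ α β : Fin k → ℤ, B (Lb α) (Lb β)
          = (ε β - ε α) • Lb (α + β)
            + (if α + β = 0 then ((ε α) ^ 3 - ε α) / 12 else 0) • Cb) ∧
      (∀ α β : Fin k → ℤ, B (Lb α) (Wb β)
          = (ε β - ε α) • Wb (α + β)
            + (if α + β = 0 then ((ε α) ^ 3 - ε α) / 12 else 0) • Cb) ∧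
      (∀ α β : Fin k → ℤ, B (Wb α) (Wb β) = 0) ∧
      (∀ x : WAlg k, B x Cb = 0) ∧
      (∀ x y : WAlg k, B x y = - B y x) ∧
      (∀ x y z : WAlg k, B x (B y z) + B y (B z x) + B z (B x y) = 0) :=
  stmt0_general k ε
end

section
/- For any g, h ∈ ℂ, the assignment L_α·v_β = (g + β + hα)·v_{α+β}, W_α·v_β = 0, C·v_β = 0 defines a module structure over the high rank W-algebra W(2,2) on the vector space with basis {v_β : β ∈ ℤᵏ}; i.e., the action respects all Lie brackets. -/
/-- For any `g, h ∈ ℂ`, the assignment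
`L_α · v_β = (g + β + hα) v_{α+β}`, `W_α · v_β = 0`, `C · v_β = 0`
defines a module structure over the high rank `W`-algebra `W(2,2)` on the vector space
`M(g,h;ℤᵏ)` with basis `{v_β : β ∈ ℤᵏ}`, i.e. the action respects all the Lie brackets
`[L_α,L_β] = (β-α)L_{α+β} + δ_{α+β,0}(α³-α)/12 C`,
`[L_α,W_β] = (β-α)W_{α+β} + δ_{α+β,0}(α³-α)/12 C`, `[W_α,W_β] = [·,C] = 0`.
Here `ε : ℤᵏ →+ ℂ` is the (injective) embedding of `ℤᵏ` in `ℂ` and the underlying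
space is `(Fin k → ℤ) →₀ ℂ` with `v_β = single β 1`. -/
theorem stmt1 (k : ℕ) (hk : 0 < k) (ε : (Fin k → ℤ) →+ ℂ)
    (hε : Function.Injective ε) (g h : ℂ) :
    ∃ (ρL ρW : (Fin k → ℤ) → Module.End ℂ ((Fin k → ℤ) →₀ ℂ))
      (ρC : Module.End ℂ ((Fin k → ℤ) →₀ ℂ)),
      (∀ α β : Fin k → ℤ,
          ρL α (Finsupp.single β 1) = (g + ε β + h * ε α) • Finsupp.single (α + β) 1) ∧
      (∀ α : Fin k → ℤ, ρW α = 0) ∧ ρC = 0 ∧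
      (∀ α β : Fin k → ℤ,
          ⁅ρL α, ρL β⁆ = (ε β - ε α) • ρL (α + β)
            + (if α + β = 0 then ((ε α) ^ 3 - ε α) / 12 else 0) • ρC) ∧
      (∀ α β : Fin k → ℤ,
          ⁅ρL α, ρW β⁆ = (ε β - ε α) • ρW (α + β)
            + (if α + β = 0 then ((ε α) ^ 3 - ε α) / 12 else 0) • ρC) ∧
      (∀ α β : Fin k → ℤ, ⁅ρW α, ρW β⁆ = 0) ∧
      (∀ α : Fin k → ℤ, ⁅ρL α, ρC⁆ = 0 ∧ ⁅ρW α, ρC⁆ = 0) := by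

  classical
  set ρL : (Fin k → ℤ) → Module.End ℂ ((Fin k → ℤ) →₀ ℂ) :=
    fun α => Finsupp.lsum ℂ (fun β => (g + ε β + h * ε α) • Finsupp.lsingle (α + β)) with hρL
  have hbasis : ∀ α β : Fin k → ℤ,
      ρL α (Finsupp.single β 1) = (g + ε β + h * ε α) • Finsupp.single (α + β) 1 := by
    intro α β
    simp [hρL, Finsupp.lsum_single]
  refine ⟨ρL, fun _ => 0, 0, hbasis, fun _ => rfl, rfl, ?_, ?_, ?_, ?_⟩
  · intro α β
    rw [LieRing.of_associative_ring_bracket]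
    ext γ : 1
    refine LinearMap.ext fun c => ?_
    simp only [LinearMap.comp_apply, Finsupp.lsingle_apply]
    rw [show (Finsupp.single γ c : (Fin k → ℤ) →₀ ℂ) = c • Finsupp.single γ 1 by
      simp [Finsupp.smul_single']]
    simp only [map_smul]
    congr 1
    simp only [LinearMap.sub_apply, Module.End.mul_apply, LinearMap.add_apply,
      LinearMap.smul_apply, LinearMap.zero_apply, smul_zero, add_zero]
    rw [hbasis, map_smul, hbasis, hbasis, map_smul, hbasis, hbasis]
    rw [show β + (α + γ) = α + (β + γ) by ring, show α + β + γ = α + (β + γ) by ring]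
    rw [smul_smul, smul_smul, smul_smul, ← sub_smul]
    congr 1
    have h1 : ε (α + β) = ε α + ε β := map_add ε α β
    have h2 : ε (β + γ) = ε β + ε γ := map_add ε β γ
    have h3 : ε (α + γ) = ε α + ε γ := map_add ε α γ
    rw [h1, h2, h3]; ring
  · intro α β
    rw [LieRing.of_associative_ring_bracket]
    simp only [mul_zero, zero_mul, sub_self, smul_zero, add_zero]
  · intro α β
    rw [LieRing.of_associative_ring_bracket]; simp
  · intro α
    constructor <;> · rw [LieRing.of_associative_ring_bracket]; simp
end

section
/- The module M(g,h;ℤᵏ) over the high rank W-algebra W(2,2) is reducible if and only if g ∈ ℤᵏ and h ∈ {0,1}. -/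
/-!
Because `ε` is injective, `L_0` acts diagonally on the basis `v_β` with pairwise distinct
eigenvalues `g + β`, so every nonzero invariant subspace contains some `v_β`. From `v_β` one
reaches `v_γ` by applying `L_{γ-β}` whenever `g + β + h(γ - β) ≠ 0`. If `h ∉ {0,1}`, each of the
two steps `β → γ → β'` fails for at most one `γ`, so every `v_β'` is reached in two steps; if
`h ∈ {0,1}` and `g ∉ ℤᵏ`, no coefficient vanishes at all. Conversely, for `g = ε γ`, the line
`ℂ v_{-γ}` is invariant when `h = 0`, and the hyperplane of vectors with no `v_{-γ}`-component
is invariant when `h = 1`.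
-/

/-- The action of `L_α` on the intermediate series module `M(g,h;ℤᵏ)`
(with basis `v_β = single β 1`): `L_α · v_β = (g + β + hα) v_{α+β}`.
The elements `W_α` and `C` act as zero. -/
noncomputable def Lact (k : ℕ) (ε : (Fin k → ℤ) →+ ℂ) (g h : ℂ) (α : Fin k → ℤ) :
    ((Fin k → ℤ) →₀ ℂ) →ₗ[ℂ] ((Fin k → ℤ) →₀ ℂ) :=
  Finsupp.lsum ℂ fun β =>
    LinearMap.toSpanSingleton ℂ _ ((g + ε β + h * ε α) • Finsupp.single (α + β) (1 : ℂ))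

open Finsupp

theorem Finsupp.exists_single_one_mem_of_diagonal {G K : Type*} [Field K]
    {T : (G →₀ K) →ₗ[K] (G →₀ K)} {c : G → K} (hc : Function.Injective c)
    (hT : ∀ v γ, T v γ = c γ * v γ) {N : Submodule K (G →₀ K)} (hN : ∀ v ∈ N, T v ∈ N)
    {v : G →₀ K} (hv : v ∈ N) (hv0 : v ≠ 0) : ∃ β, single β 1 ∈ N := by
  classical
  induction hn : v.support.card using Nat.strong_induction_on generalizing v with
  | _ n ih =>
  obtain ⟨β₀, hβ₀⟩ := support_nonempty_iff.mpr hv0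
  set w := T v - c β₀ • v
  have hw : w ∈ N := N.sub_mem (hN v hv) (N.smul_mem _ hv)
  have hw_supp : w.support = v.support.erase β₀ := by
    ext γ
    simp only [w, mem_support_iff, Finset.mem_erase, coe_sub, coe_smul, Pi.sub_apply,
      Pi.smul_apply, smul_eq_mul, hT, ← sub_mul, mul_ne_zero_iff, sub_ne_zero, hc.ne_iff]
  rcases (v.support.erase β₀).eq_empty_or_nonempty with hempty | hne
  · have hsub : v.support ⊆ {β₀} := fun γ hγ => Finset.mem_singleton.mpr <| by
      by_contra hγβ₀
      exact Finset.notMem_empty γ (hempty ▸ Finset.mem_erase.mpr ⟨hγβ₀, hγ⟩)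
    refine ⟨β₀, ?_⟩
    have := N.smul_mem (v β₀)⁻¹ hv
    rwa [support_subset_singleton.mp hsub, smul_single, smul_eq_mul, single_apply, if_pos rfl,
      inv_mul_cancel₀ (mem_support_iff.mp hβ₀)] at this
  · exact ih _ (hn ▸ hw_supp ▸ Finset.card_erase_lt_of_mem hβ₀) hw
      (support_nonempty_iff.mp (hw_supp ▸ hne)) rfl

theorem exists_two_step_path {G : Type*} [AddCommGroup G] [Infinite G] {ε : G →+ ℂ}
    (hε : Function.Injective ε) {g h : ℂ} (hgh : ¬((∃ β, g = ε β) ∧ (h = 0 ∨ h = 1)))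
    (β β' : G) : ∃ γ, g + ε β + h * ε (γ - β) ≠ 0 ∧ g + ε γ + h * ε (β' - γ) ≠ 0 := by
  by_cases hh : h = 0 ∨ h = 1
  · have hg : ∀ δ, g + ε δ ≠ 0 := fun δ hδ =>
      hgh ⟨⟨-δ, by rw [map_neg]; linear_combination hδ⟩, hh⟩
    refine ⟨β', ?_, by simpa using hg β'⟩
    rcases hh with rfl | rfl
    · simpa using hg β
    · simpa using hg β'
  · rw [not_or] at hh
    have hS₁ : {γ | g + ε β + h * ε (γ - β) = 0}.Subsingleton := fun γ₁ h₁ γ₂ h₂ => by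
      simp only [Set.mem_ofPred_eq, map_sub] at h₁ h₂
      exact hε (mul_left_cancel₀ hh.1 (by linear_combination h₁ - h₂))
    have hS₂ : {γ | g + ε γ + h * ε (β' - γ) = 0}.Subsingleton := fun γ₁ h₁ γ₂ h₂ => by
      simp only [Set.mem_ofPred_eq, map_sub] at h₁ h₂
      exact hε (mul_left_cancel₀ (sub_ne_zero.mpr (Ne.symm hh.2)) (by linear_combination h₁ - h₂))
    obtain ⟨γ, hγ⟩ := (hS₁.finite.union hS₂.finite).exists_notMem
    exact ⟨γ, fun h₁ => hγ (Or.inl h₁), fun h₂ => hγ (Or.inr h₂)⟩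

theorem Finsupp.span_single_one_ne_top {G K : Type*} [Nontrivial G] [Field K] (β : G) :
    Submodule.span K {single β (1 : K)} ≠ ⊤ := fun htop => by
  obtain ⟨β', hβ'⟩ := exists_ne β
  have hmem : single β' (1 : K) ∈ Submodule.span K ((single · (1 : K)) '' {β}) := by
    rw [Set.image_singleton, htop]
    exact Submodule.mem_top
  exact hβ' ((single_mem_span_single K (s := {β})).mp hmem)

theorem Finsupp.ker_lapply_ne_bot {G K : Type*} [Nontrivial G] [Field K] (β : G) :
    LinearMap.ker (lapply β : (G →₀ K) →ₗ[K] K) ≠ ⊥ := by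
  obtain ⟨β', hβ'⟩ := exists_ne β
  rw [Submodule.ne_bot_iff]
  exact ⟨single β' 1, by simp [hβ'], single_ne_zero.mpr one_ne_zero⟩

theorem Finsupp.ker_lapply_ne_top {G K : Type*} [Field K] (β : G) :
    LinearMap.ker (lapply β : (G →₀ K) →ₗ[K] K) ≠ ⊤ := fun htop => by
  have hmem : single β (1 : K) ∈ LinearMap.ker (lapply β) := htop ▸ Submodule.mem_top
  simp at hmem

section Lact

variable {k : ℕ} {ε : (Fin k → ℤ) →+ ℂ} {g h : ℂ}

theorem Lact_single (α β : Fin k → ℤ) (c : ℂ) :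
    Lact k ε g h α (single β c) = single (α + β) (c * (g + ε β + h * ε α)) := by
  rw [Lact, lsum_single, LinearMap.toSpanSingleton_apply, smul_smul, smul_single, smul_eq_mul,
    mul_one]

theorem Lact_apply (α : Fin k → ℤ) (v : (Fin k → ℤ) →₀ ℂ) (γ : Fin k → ℤ) :
    Lact k ε g h α v γ = v (γ - α) * (g + ε (γ - α) + h * ε α) := by
  induction v using induction_linear with
  | zero => simp
  | add v w hv hw => simp [hv, hw, add_mul]
  | single β c =>
    rw [Lact_single, single_apply, single_apply]
    by_cases hβ : α + β = γ
    · subst hβ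
      simp
    · rw [if_neg hβ, if_neg (fun h' => hβ (by rw [h']; abel)), zero_mul]

variable (k ε g h) in
def IsLactInvariant (N : Submodule ℂ ((Fin k → ℤ) →₀ ℂ)) : Prop :=
  ∀ α, ∀ v ∈ N, Lact k ε g h α v ∈ N

variable {N : Submodule ℂ ((Fin k → ℤ) →₀ ℂ)}

theorem IsLactInvariant.exists_single_one_mem (hε : Function.Injective ε)
    (hN : IsLactInvariant k ε g h N) (hN0 : N ≠ ⊥) : ∃ β, single β 1 ∈ N := by
  obtain ⟨v, hv, hv0⟩ := Submodule.ne_bot_iff N |>.mp hN0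
  refine exists_single_one_mem_of_diagonal (T := Lact k ε g h 0) (c := fun γ => g + ε γ)
    (fun γ₁ γ₂ h₁₂ => hε (add_left_cancel h₁₂)) (fun v γ => ?_) (hN 0) hv hv0
  rw [Lact_apply]
  simp [mul_comm]

theorem IsLactInvariant.single_one_mem (hN : IsLactInvariant k ε g h N) {β γ : Fin k → ℤ}
    (hβ : single β 1 ∈ N) (hβγ : g + ε β + h * ε (γ - β) ≠ 0) : single γ 1 ∈ N := by
  have := N.smul_mem (g + ε β + h * ε (γ - β))⁻¹ (hN (γ - β) _ hβ)
  rwa [Lact_single, sub_add_cancel, smul_single, one_mul, smul_eq_mul,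
    inv_mul_cancel₀ hβγ] at this

theorem IsLactInvariant.eq_top [Nonempty (Fin k)] (hε : Function.Injective ε)
    (hgh : ¬((∃ β, g = ε β) ∧ (h = 0 ∨ h = 1))) (hN : IsLactInvariant k ε g h N)
    (hN0 : N ≠ ⊥) : N = ⊤ := by
  obtain ⟨β, hβ⟩ := hN.exists_single_one_mem hε hN0
  have hsingle : ∀ β', single β' (1 : ℂ) ∈ N := fun β' => by
    obtain ⟨γ, hβγ, hγβ'⟩ := exists_two_step_path hε hgh β β'
    exact hN.single_one_mem (hN.single_one_mem hβ hβγ) hγβ'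
  rw [eq_top_iff, ← Finsupp.basisSingleOne.span_eq, Submodule.span_le, coe_basisSingleOne]
  rintro _ ⟨β', rfl⟩
  exact hsingle β'

theorem isLactInvariant_span_single_neg (γ : Fin k → ℤ) :
    IsLactInvariant k ε (ε γ) 0 (Submodule.span ℂ {single (-γ) 1}) := by
  intro α v hv
  obtain ⟨c, rfl⟩ := Submodule.mem_span_singleton.mp hv
  simp [Lact_single]

theorem isLactInvariant_ker_lapply_neg (γ : Fin k → ℤ) :
    IsLactInvariant k ε (ε γ) 1 (LinearMap.ker (lapply (-γ))) := by
  intro α v _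
  rw [LinearMap.mem_ker, lapply_apply, Lact_apply, ε.map_sub, ε.map_neg]
  ring

end Lact

/-- the module `M(g,h;ℤᵏ)` over the high rank `W`-algebra `W(2,2)`
(on which `W_α` and `C` act as zero, so a submodule is just a subspace invariant under
all `L_α`) is reducible if and only if `g ∈ ℤᵏ` (viewed inside `ℂ` via the injective
embedding `ε`) and `h ∈ {0,1}`. -/
theorem stmt2 (k : ℕ) (hk : 0 < k) (ε : (Fin k → ℤ) →+ ℂ)
    (hε : Function.Injective ε) (g h : ℂ) :
    (∃ N : Submodule ℂ ((Fin k → ℤ) →₀ ℂ),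
        (∀ (α : Fin k → ℤ), ∀ v ∈ N, Lact k ε g h α v ∈ N) ∧ N ≠ ⊥ ∧ N ≠ ⊤)
      ↔ ((∃ β : Fin k → ℤ, g = ε β) ∧ (h = 0 ∨ h = 1)) := by
  have : Nonempty (Fin k) := Fin.pos_iff_nonempty.mp hk
  constructor
  · rintro ⟨N, hN, hN0, hNtop⟩
    by_contra hgh
    exact hNtop (IsLactInvariant.eq_top hε hgh hN hN0)
  · rintro ⟨⟨γ, rfl⟩, rfl | rfl⟩
    · refine ⟨_, isLactInvariant_span_single_neg γ, ?_, span_single_one_ne_top (-γ)⟩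
      simp
    · exact ⟨_, isLactInvariant_ker_lapply_neg γ, ker_lapply_ne_bot (-γ), ker_lapply_ne_top (-γ)⟩
end

section
/- Let M be a module over the centerless high rank W-algebra W(2,2) which is also a module over the commutative unital algebra A = ℂ[t^{±1}] (group algebra of ℤᵏ) with compatibility y(fv) = (yf)v + f(yv) for y in the Lie algebra, f ∈ A, v ∈ M, where L_m·t^n = n t^{m+n} and W_m·t^n = μ·n t^{m+n} for some fixed scalar μ ∈ ℂ (the action of 1⊗x). If k ≥ 1 and M is nonzero with some t^n-action injective, then μ = 0; consequently W_α(t^n v) = t^n(W_α v) for all α, n ∈ ℤᵏ, v ∈ M. -/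
/-- Let `M` be a module over the centerless high rank `W`-algebra `W(2,2)`
(operators `Lop, Wop` satisfying the bracket relations) which is also a module over the
commutative unital algebra `A = ℂ[t^{±1}]` (group algebra of `ℤᵏ`, acting by the
invertible operators `Top n`), with compatibility `y(fv) = (yf)v + f(yv)`, where
`L_m · tⁿ = n t^{m+n}` and `W_m · tⁿ = μ n t^{m+n}` for a fixed scalar `μ ∈ ℂ`.
If `k ≥ 1` and `M` is nonzero with some `tⁿ`-action injective, then `μ = 0`;
consequently `W_α(tⁿ v) = tⁿ (W_α v)` for all `α, n ∈ ℤᵏ`, `v ∈ M`. -/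
theorem stmt3 (k : ℕ) (hk : 0 < k) (ε : (Fin k → ℤ) →+ ℂ)
    (hε : Function.Injective ε)
    (M : Type*) [AddCommGroup M] [Module ℂ M]
    (Lop Wop Top : (Fin k → ℤ) → Module.End ℂ M) (μ : ℂ)
    (hT0 : Top 0 = 1)
    (hTadd : ∀ m n : Fin k → ℤ, Top m * Top n = Top (m + n))
    (hLL : ∀ a b : Fin k → ℤ, ⁅Lop a, Lop b⁆ = (ε b - ε a) • Lop (a + b))
    (hLW : ∀ a b : Fin k → ℤ, ⁅Lop a, Wop b⁆ = (ε b - ε a) • Wop (a + b))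
    (hWW : ∀ a b : Fin k → ℤ, ⁅Wop a, Wop b⁆ = 0)
    (hLT : ∀ (m n : Fin k → ℤ) (v : M),
      Lop m (Top n v) = ε n • Top (m + n) v + Top n (Lop m v))
    (hWT : ∀ (m n : Fin k → ℤ) (v : M),
      Wop m (Top n v) = (μ * ε n) • Top (m + n) v + Top n (Wop m v))
    (hM : ∃ v : M, v ≠ 0)
    (hinj : ∃ n : Fin k → ℤ, Function.Injective (Top n)) :
    μ = 0 ∧ ∀ (α n : Fin k → ℤ) (v : M), Wop α (Top n v) = Top n (Wop α v) := by
  obtain ⟨v, hv⟩ := hM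
  -- every Top m is injective
  have hTinj : ∀ m : Fin k → ℤ, Function.Injective (Top m) := by
    intro m a b hab
    have h1 : Top (-m) * Top m = 1 := by rw [hTadd]; simp [hT0]
    have := congrArg (Top (-m)) hab
    calc a = (Top (-m) * Top m) a := by rw [h1]; rfl
    _ = (Top (-m) * Top m) b := this
    _ = b := by rw [h1]; rfl
  -- Wop 0 and Wop n commute
  have hcomm : ∀ (a b : Fin k → ℤ) (x : M), Wop a (Wop b x) = Wop b (Wop a x) := by
    intro a b x
    have := hWW a b
    rw [Ring.lie_def, sub_eq_zero] at this
    exact congrFun (congrArg (fun f : Module.End ℂ M => (f : M → M)) this) x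
  set i : Fin k := ⟨0, hk⟩
  set n : Fin k → ℤ := Pi.single i 1 with hn
  have hn0 : n ≠ 0 := by
    intro h
    have := congrFun h i
    simp [hn] at this
  have hεn : ε n ≠ 0 := by
    intro h
    exact hn0 (hε (by simp [h]))
  have e1 : Wop 0 (Wop n (Top n v)) =
      (μ * ε n) • ((μ * ε (n + n)) • Top (0 + (n + n)) v + Top (n + n) (Wop 0 v))
      + ((μ * ε n) • Top (0 + n) (Wop n v) + Top n (Wop 0 (Wop n v))) := by
    rw [hWT n n v, map_add, map_smul, hWT 0 (n + n) v, hWT 0 n (Wop n v)]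
  have e2 : Wop n (Wop 0 (Top n v)) =
      (μ * ε n) • ((μ * ε (0 + n)) • Top (n + (0 + n)) v + Top (0 + n) (Wop n v))
      + ((μ * ε n) • Top (n + n) (Wop 0 v) + Top n (Wop n (Wop 0 v))) := by
    rw [hWT 0 n v, map_add, map_smul, hWT n (0 + n) v, hWT n n (Wop 0 v)]
  have e3 : Wop 0 (Wop n (Top n v)) = Wop n (Wop 0 (Top n v)) := hcomm 0 n _
  rw [e1, e2, hcomm 0 n v] at e3
  simp only [zero_add, smul_add, smul_smul] at e3
  have e4 : ((μ * ε n) * (μ * ε (n + n)) - (μ * ε n) * (μ * ε n)) • Top (n + n) v = 0 := by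
    rw [sub_smul]
    linear_combination (norm := module) e3
  have e5 : (μ * ε n) * (μ * ε (n + n)) - (μ * ε n) * (μ * ε n) = 0 := by
    by_contra h
    have h2 : Top (n + n) (((μ * ε n) * (μ * ε (n + n)) - (μ * ε n) * (μ * ε n)) • v) = 0 := by
      rw [map_smul]; exact e4
    have h3 : ((μ * ε n) * (μ * ε (n + n)) - (μ * ε n) * (μ * ε n)) • v = 0 := by
      apply hTinj (n + n)
      rw [h2, map_zero]
    rcases smul_eq_zero.mp h3 with h4 | h4
    · exact h h4
    · exact hv h4
  have hμ : μ = 0 := by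
    have := e5
    rw [map_add] at this
    have h6 : μ ^ 2 * ε n ^ 2 = 0 := by linear_combination this
    have := mul_eq_zero.mp h6
    rcases this with h | h
    · exact pow_eq_zero_iff (by norm_num) |>.mp h
    · exact absurd (pow_eq_zero_iff (by norm_num) |>.mp h) hεn
  refine ⟨hμ, fun α m w => ?_⟩
  rw [hWT α m w, hμ, zero_mul, zero_smul, zero_add]
end

section
/- Let W be a vector space and D : ℤᵏ → End(W) a family of operators satisfying [D(s), D(m)] = (m−s)D(s+m) − m·D(m) + s·D(s) for all s, m ∈ ℤᵏ (where ℤᵏ ⊆ ℂ so that scalar multiplication by m−s, m, s makes sense). Suppose D(m_j ε_j) is a polynomial in m_j with End(W) coefficients for each basis element ε_j, and W is finite-dimensional. Then D(m) is given by an End(W)-valued polynomial in the coordinates (m₁,…,m_k) of m, with constant term D(0). -/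
/-!
Induct on the set of coordinates allowed to be nonzero. For `m = m' + m_j e_j` with `m'`
supported on the old coordinates, the bracket of `D (m_j e_j)` and `D m'` gives
`(ε m' - m_j ε e_j) • D m = P m` with `P` polynomial. Dividing `P` by the linear form
`x ↦ ε m' - x_j ε e_j` leaves as remainder the value of `P` where that form vanishes. Along the
line `m' + z e_j` the bracket with `D e_j` is a recursion in `z`; cleared of denominators it is a
polynomial identity in `z`, and at the root `z = ε m' / ε e_j` it forces the remainder to vanish,
since `ε m' ≠ ε e_j`. Injectivity of `ε` also makes the linear form nonzero at every `m ≠ 0`, and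
`D 0` is recovered by interpolating along a coordinate axis. Identities between polynomial maps are
checked at integer points, which are Zariski dense.
-/

open MvPolynomial
open Function hiding eval

theorem MvPolynomial.X_sub_dvd_sub_bind₁_update {R σ : Type*} [CommRing R] [DecidableEq σ]
    (j : σ) (q p : MvPolynomial σ R) : X j - q ∣ p - bind₁ (update X j q) p := by
  induction p using MvPolynomial.induction_on with
  | C a => simp
  | add p p' hp hp' => rw [map_add, add_sub_add_comm]; exact dvd_add hp hp'
  | mul_X p i hp =>
    rw [map_mul, bind₁_X_right]
    by_cases hij : i = j
    · subst hij
      rw [update_self, show p * X i - bind₁ (update X i q) p * q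
        = (p - bind₁ (update X i q) p) * X i + bind₁ (update X i q) p * (X i - q) by ring]
      exact dvd_add (hp.mul_right _) (dvd_mul_left _ _)
    · rw [update_of_ne hij, ← sub_mul]
      exact hp.mul_right _

section PolynomialMaps

variable (σ E : Type*) [AddCommGroup E] [Module ℂ E]

def polynomialMaps : Submodule ℂ ((σ → ℂ) → E) :=
  Submodule.span ℂ (Set.range fun pv : MvPolynomial σ ℂ × E => fun x => eval x pv.1 • pv.2)

namespace polynomialMaps

variable {σ E} {F G : (σ → ℂ) → E}

theorem eval_smul_mem (p : MvPolynomial σ ℂ) (v : E) :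
    (fun x => eval x p • v) ∈ polynomialMaps σ E :=
  Submodule.subset_span ⟨(p, v), rfl⟩

theorem const_mem (v : E) : (fun _ => v) ∈ polynomialMaps σ E := by
  simpa using eval_smul_mem (σ := σ) 1 v

theorem coord_mem (i : σ) : (fun x => x i) ∈ polynomialMaps σ ℂ := by
  simpa using eval_smul_mem (X i) (1 : ℂ)

theorem add_mem' (hF : F ∈ polynomialMaps σ E) (hG : G ∈ polynomialMaps σ E) :
    (fun x => F x + G x) ∈ polynomialMaps σ E :=
  add_mem hF hG

theorem sub_mem' (hF : F ∈ polynomialMaps σ E) (hG : G ∈ polynomialMaps σ E) :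
    (fun x => F x - G x) ∈ polynomialMaps σ E :=
  sub_mem hF hG

theorem const_smul_mem (a : ℂ) (hF : F ∈ polynomialMaps σ E) :
    (fun x => a • F x) ∈ polynomialMaps σ E :=
  Submodule.smul_mem _ a hF

theorem sum_mem' {κ : Type*} (s : Finset κ) {F : κ → (σ → ℂ) → E}
    (hF : ∀ i ∈ s, F i ∈ polynomialMaps σ E) :
    (fun x => ∑ i ∈ s, F i x) ∈ polynomialMaps σ E := by
  simpa only [← Finset.sum_fn] using Submodule.sum_mem _ hF

theorem linearMap_comp_mem {E' : Type*} [AddCommGroup E'] [Module ℂ E'] (L : E →ₗ[ℂ] E')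
    (hF : F ∈ polynomialMaps σ E) : (fun x => L (F x)) ∈ polynomialMaps σ E' := by
  induction hF using Submodule.span_induction with
  | mem _ h =>
    obtain ⟨⟨p, v⟩, rfl⟩ := h
    simpa using eval_smul_mem p (L v)
  | zero => simpa using const_mem (σ := σ) (0 : E')
  | add _ _ _ _ hF hG => simpa using add_mem' hF hG
  | smul a _ _ hF => simpa using const_smul_mem a hF

theorem exists_eval_eq {f : (σ → ℂ) → ℂ} (hf : f ∈ polynomialMaps σ ℂ) :
    ∃ q : MvPolynomial σ ℂ, ∀ x, f x = eval x q := by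
  induction hf using Submodule.span_induction with
  | mem _ h =>
    obtain ⟨⟨p, c⟩, rfl⟩ := h
    exact ⟨p * C c, fun x => by simp⟩
  | zero => exact ⟨0, fun x => by simp⟩
  | add _ _ _ _ hf hg =>
    obtain ⟨p, hp⟩ := hf
    obtain ⟨q, hq⟩ := hg
    exact ⟨p + q, fun x => by simp [hp, hq]⟩
  | smul a _ _ hf =>
    obtain ⟨p, hp⟩ := hf
    exact ⟨C a * p, fun x => by simp [hp]⟩

theorem smul_mem' {f : (σ → ℂ) → ℂ} (hf : f ∈ polynomialMaps σ ℂ)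
    (hF : F ∈ polynomialMaps σ E) : (fun x => f x • F x) ∈ polynomialMaps σ E := by
  obtain ⟨q, hq⟩ := exists_eval_eq hf
  simp only [hq]
  induction hF using Submodule.span_induction with
  | mem _ h =>
    obtain ⟨⟨p, v⟩, rfl⟩ := h
    simpa [smul_smul] using eval_smul_mem (q * p) v
  | zero => simpa using const_mem (σ := σ) (0 : E)
  | add _ _ _ _ hF hG => simpa using add_mem' hF hG
  | smul a _ _ hF => simpa [smul_comm _ a] using const_smul_mem a hF

theorem mul_mem' {A : Type*} [Ring A] [Algebra ℂ A] {F G : (σ → ℂ) → A}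
    (hF : F ∈ polynomialMaps σ A) (hG : G ∈ polynomialMaps σ A) :
    (fun x => F x * G x) ∈ polynomialMaps σ A := by
  induction hF using Submodule.span_induction with
  | mem _ h =>
    obtain ⟨⟨p, a⟩, rfl⟩ := h
    simpa using smul_mem' (by simpa using eval_smul_mem p (1 : ℂ))
      (linearMap_comp_mem (LinearMap.mulLeft ℂ a) hG)
  | zero => simpa using const_mem (σ := σ) (0 : A)
  | add _ _ _ _ hF hF' => simpa [add_mul] using add_mem' hF hF'
  | smul a _ _ hF => simpa using const_smul_mem a hF

theorem lie_mem {A : Type*} [Ring A] [Algebra ℂ A] {F G : (σ → ℂ) → A}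
    (hF : F ∈ polynomialMaps σ A) (hG : G ∈ polynomialMaps σ A) :
    (fun x => ⁅F x, G x⁆) ∈ polynomialMaps σ A := by
  simpa only [Ring.lie_def] using sub_mem' (mul_mem' hF hG) (mul_mem' hG hF)

theorem comp_mem {τ : Type*} {F : (τ → ℂ) → E} (hF : F ∈ polynomialMaps τ E)
    {g : τ → (σ → ℂ) → ℂ} (hg : ∀ i, g i ∈ polynomialMaps σ ℂ) :
    (fun x => F fun i => g i x) ∈ polynomialMaps σ E := by
  choose q hq using fun i => exists_eval_eq (hg i)
  induction hF using Submodule.span_induction with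
  | mem _ h =>
    obtain ⟨⟨p, v⟩, rfl⟩ := h
    convert eval_smul_mem (bind₁ q p) v using 3 with x
    simp only [hq]
    exact (eval₂Hom_bind₁ _ _ _ _).symm
  | zero => simpa using const_mem (σ := σ) (0 : E)
  | add _ _ _ _ hF hG => simpa using add_mem' hF hG
  | smul a _ _ hF => simpa using const_smul_mem a hF

theorem comp_update_mem [DecidableEq σ] (hF : F ∈ polynomialMaps σ E) {y : (σ → ℂ) → σ → ℂ}
    (hy : ∀ i, (fun x => y x i) ∈ polynomialMaps σ ℂ) (j : σ) {f : (σ → ℂ) → ℂ}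
    (hf : f ∈ polynomialMaps σ ℂ) :
    (fun x => F (update (y x) j (f x))) ∈ polynomialMaps σ E := by
  refine comp_mem hF fun i => ?_
  by_cases hij : i = j
  · subst hij; simpa using hf
  · simpa [update_of_ne hij] using hy i

theorem eq_zero_of_forall_mem_pi (hF : F ∈ polynomialMaps σ E) {s : σ → Set ℂ}
    (hs : ∀ i, (s i).Infinite) (h : ∀ x ∈ Set.univ.pi s, F x = 0) : F = 0 := by
  funext x
  refine (Module.forall_dual_apply_eq_zero_iff ℂ (F x)).mp fun φ => ?_
  obtain ⟨q, hq⟩ := exists_eval_eq (linearMap_comp_mem φ hF)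
  have hq0 : q = 0 := funext_set s hs fun y hy => by simp [← hq, h y hy]
  simp [hq, hq0]

theorem eq_zero_of_forall_intCast (hF : F ∈ polynomialMaps σ E)
    (h : ∀ m : σ → ℤ, (∀ i, m i ≠ 0) → F (fun i => m i) = 0) : F = 0 := by
  have hinf : ((↑) '' {z : ℤ | z ≠ 0} : Set ℂ).Infinite :=
    (Set.finite_singleton 0).infinite_compl.image Int.cast_injective.injOn
  refine eq_zero_of_forall_mem_pi hF (fun _ => hinf) fun x hx => ?_
  rw [Set.mem_univ_pi] at hx
  choose m hm hmx using hx
  simpa [funext fun i => (hmx i).symm] using h m hm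

theorem eq_of_forall_intCast_ne_zero {j : σ} {p q : ℂ → E}
    (hp : (fun x => p (x j)) ∈ polynomialMaps σ E)
    (hq : (fun x => q (x j)) ∈ polynomialMaps σ E)
    (h : ∀ z : ℤ, z ≠ 0 → p z = q z) (z : ℂ) : p z = q z := by
  have hzero := eq_zero_of_forall_intCast (sub_mem' hp hq) fun m hm =>
    sub_eq_zero.mpr (h (m j) (hm j))
  exact sub_eq_zero.mp (congrFun hzero fun _ => z)

theorem apply_zero_eq_of_apply_single [DecidableEq σ] (hF : F ∈ polynomialMaps σ E) {j : σ}
    {a : ℂ → E} (ha : (fun x => a (x j)) ∈ polynomialMaps σ E)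
    (h : ∀ z : ℤ, z ≠ 0 → F (Pi.single j (z : ℂ)) = a z) : F 0 = a 0 := by
  simpa using eq_of_forall_intCast_ne_zero (p := fun z => F (Pi.single j z))
    (comp_update_mem hF (fun _ => const_mem 0) j (coord_mem j)) ha h 0

theorem exists_eq_update_add_smul [DecidableEq σ] (hF : F ∈ polynomialMaps σ E) (j : σ)
    {c : (σ → ℂ) → ℂ} (hc : c ∈ polynomialMaps σ ℂ) :
    ∃ Q ∈ polynomialMaps σ E, ∀ x, F x = F (update x j (c x)) + (x j - c x) • Q x := by
  obtain ⟨q, hq⟩ := exists_eval_eq hc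
  induction hF using Submodule.span_induction with
  | mem _ h =>
    obtain ⟨⟨p, v⟩, rfl⟩ := h
    obtain ⟨r, hr⟩ := X_sub_dvd_sub_bind₁_update j q p
    refine ⟨_, eval_smul_mem r v, fun x => ?_⟩
    have := congrArg (eval x) hr
    have hupd : (fun i => eval x (update X j q i)) = update x j (c x) := by
      funext i
      by_cases hij : i = j
      · subst hij; simp [hq]
      · simp [update_of_ne hij]
    simp only [map_sub, map_mul, eval_X, ← hq] at this
    rw [show eval x (bind₁ (update X j q) p) = eval (update x j (c x)) p by
      rw [← hupd]; exact eval₂Hom_bind₁ _ _ _ _] at this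
    dsimp only
    rw [smul_smul, ← this, sub_smul, add_sub_cancel]
  | zero => exact ⟨0, zero_mem _, fun x => by simp⟩
  | add _ _ _ _ hF hG =>
    obtain ⟨Q, hQ, hFQ⟩ := hF
    obtain ⟨Q', hQ', hGQ⟩ := hG
    refine ⟨_, add_mem' hQ hQ', fun x => ?_⟩
    rw [Pi.add_apply, Pi.add_apply, hFQ, hGQ, smul_add]
    abel
  | smul a _ _ hF =>
    obtain ⟨Q, hQ, hFQ⟩ := hF
    refine ⟨_, const_smul_mem a hQ, fun x => ?_⟩
    rw [Pi.smul_apply, Pi.smul_apply, hFQ, smul_add, smul_comm]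

theorem exists_eq_of_smul_eq [DecidableEq σ] {P : (σ → ℂ) → E} (hP : P ∈ polynomialMaps σ E)
    {α : (σ → ℂ) → ℂ} (hα : α ∈ polynomialMaps σ ℂ) {b : ℂ} (hb : b ≠ 0) (j : σ) :
    ∃ Q ∈ polynomialMaps σ E, ∀ x (v : E), P (update x j (α x / b)) = 0 →
      P x = (α x - b * x j) • v → α x ≠ b * x j → v = Q x := by
  obtain ⟨Q, hQ, hPQ⟩ := exists_eq_update_add_smul hP j (c := fun x => α x / b)
    (by simpa only [div_eq_inv_mul, smul_eq_mul] using smul_mem' (const_mem b⁻¹) hα)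
  refine ⟨_, const_smul_mem (-b⁻¹) hQ, fun x v hx hv hL => ?_⟩
  rw [hPQ, hx, zero_add, show x j - α x / b = -b⁻¹ * (α x - b * x j) by field_simp; ring,
    mul_smul, smul_comm] at hv
  exact smul_right_injective E (sub_ne_zero.mpr hL) hv.symm

theorem apply_update_div_eq_zero {A : Type*} [Ring A] [Algebra ℂ A] [DecidableEq σ]
    {P : (σ → ℂ) → A} (hP : P ∈ polynomialMaps σ A) (y : σ → ℂ) (j : σ) {f : ℤ → A} {u : A}
    {α b : ℂ} (hb : b ≠ 0) (hαb : α ≠ b)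
    (hPf : ∀ z : ℤ, P (update y j z) = (α - b * z) • f z)
    (hf : ∀ z : ℤ, ⁅u, f (z - 1)⁆
      = (α + (z - 1) * b - b) • f z - (α + (z - 1) * b) • f (z - 1) + b • u) :
    P (update y j (α / b)) = 0 := by
  set p : ℂ → A := fun z => P (update y j z)
  have hz₁ : (fun x : σ → ℂ => x j - 1) ∈ polynomialMaps σ ℂ :=
    sub_mem' (coord_mem j) (const_mem 1)
  have hz₂ : (fun x : σ → ℂ => x j - 2) ∈ polynomialMaps σ ℂ :=
    sub_mem' (coord_mem j) (const_mem 2)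
  have hp : (fun x => p (x j)) ∈ polynomialMaps σ A :=
    comp_update_mem hP (fun i => const_mem (y i)) j (coord_mem j)
  have hp₁ : (fun x => p (x j - 1)) ∈ polynomialMaps σ A :=
    comp_update_mem hP (fun i => const_mem (y i)) j hz₁
  have hl : ∀ {g : (σ → ℂ) → ℂ}, g ∈ polynomialMaps σ ℂ →
      (fun x => α - b * g x) ∈ polynomialMaps σ ℂ ∧
        (fun x => α + g x * b) ∈ polynomialMaps σ ℂ :=
    fun hg => ⟨sub_mem' (const_mem α) (mul_mem' (const_mem b) hg),
      add_mem' (const_mem α) (mul_mem' hg (const_mem b))⟩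
  -- the recursion `hf` multiplied by both denominators, now a polynomial identity in `z`
  have key : ∀ z : ℂ, (α - b * z) • ⁅u, p (z - 1)⁆
      = (α - b * (z - 1)) • (α + (z - 2) * b) • p z
        - (α - b * z) • (α + (z - 1) * b) • p (z - 1)
        + ((α - b * z) * (α - b * (z - 1)) * b) • u := by
    refine eq_of_forall_intCast_ne_zero (smul_mem' (hl (coord_mem j)).1
      (lie_mem (const_mem u) hp₁)) (add_mem' (sub_mem' (smul_mem' (hl hz₁).1
        (smul_mem' (hl hz₂).2 hp)) (smul_mem' (hl (coord_mem j)).1 (smul_mem' (hl hz₁).2 hp₁)))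
        (smul_mem' (mul_mem' (mul_mem' (hl (coord_mem j)).1 (hl hz₁).1) (const_mem b))
          (const_mem u))) fun z _ => ?_
    have h₁ := hPf (z - 1)
    push_cast at h₁
    simp only [p]
    rw [hPf, h₁, Ring.lie_def, mul_smul_comm, smul_mul_assoc, ← smul_sub, ← Ring.lie_def, hf]
    module
  have h := key (α / b)
  rw [show α - b * (α / b) = 0 by field_simp; ring,
    show α - b * (α / b - 1) = b by field_simp; ring,
    show α + (α / b - 2) * b = 2 * (α - b) by field_simp; ring] at h
  simp only [zero_smul, zero_mul, sub_zero, add_zero, smul_smul] at h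
  exact (smul_eq_zero.mp h.symm).resolve_left
    (mul_ne_zero hb (mul_ne_zero two_ne_zero (sub_ne_zero.mpr hαb)))

theorem exists_sum_prod_pow_smul [Fintype σ] (hF : F ∈ polynomialMaps σ E) :
    ∃ (S : Finset (σ → ℕ)) (c : (σ → ℕ) → E), (∀ i ∉ S, c i = 0) ∧
      ∀ x, F x = ∑ i ∈ S, (∏ l, x l ^ i l) • c i := by
  classical
  induction hF using Submodule.span_induction with
  | mem _ h =>
    obtain ⟨⟨p, v⟩, rfl⟩ := h
    let e := Finsupp.equivFunOnFinite (α := σ) (M := ℕ)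
    refine ⟨p.support.image e, fun i => coeff (e.symm i) p • v, fun i hi => ?_, fun x => ?_⟩
    · show coeff (e.symm i) p • v = 0
      rw [notMem_support_iff.mp fun hs =>
        hi (Finset.mem_image.mpr ⟨_, hs, e.apply_symm_apply i⟩), zero_smul]
    · rw [Finset.sum_image fun _ _ _ _ h => e.injective h]
      simp [eval_eq', Finset.sum_smul, smul_smul, mul_comm, e]
  | zero => exact ⟨∅, 0, fun _ _ => rfl, fun x => by simp⟩
  | add _ _ _ _ hF hG =>
    obtain ⟨S, c, hc, hFc⟩ := hF
    obtain ⟨S', c', hc', hGc⟩ := hG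
    refine ⟨S ∪ S', c + c', fun i hi => ?_, fun x => ?_⟩
    · simp only [Finset.mem_union, not_or] at hi
      simp [hc i hi.1, hc' i hi.2]
    · have h₁ := Finset.sum_subset (Finset.subset_union_left (s₂ := S'))
        fun i _ hi => by rw [hc i hi, smul_zero] (f := fun i => (∏ l, x l ^ i l) • c i)
      have h₂ := Finset.sum_subset (Finset.subset_union_right (s₁ := S))
        fun i _ hi => by rw [hc' i hi, smul_zero] (f := fun i => (∏ l, x l ^ i l) • c' i)
      rw [Pi.add_apply, hFc, hGc, h₁, h₂, ← Finset.sum_add_distrib]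
      simp [smul_add]
  | smul a _ _ hF =>
    obtain ⟨S, c, hc, hFc⟩ := hF
    exact ⟨S, a • c, fun i hi => by simp [hc i hi], fun x => by
      simp [hFc, Finset.smul_sum, smul_comm a]⟩

theorem exists_sum_prod_pow_smul_of_zero_mem [Fintype σ] (hF : F ∈ polynomialMaps σ E) :
    ∃ (S : Finset (σ → ℕ)) (c : (σ → ℕ) → E), 0 ∈ S ∧ c 0 = F 0 ∧
      ∀ x, F x = ∑ i ∈ S, (∏ l, x l ^ i l) • c i := by
  classical
  obtain ⟨S, c, hc, hFc⟩ := exists_sum_prod_pow_smul hF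
  have hsum : ∀ x, F x = ∑ i ∈ insert 0 S, (∏ l, x l ^ i l) • c i := fun x => by
    rw [hFc, Finset.sum_subset (Finset.subset_insert 0 S) fun i _ hi => by rw [hc i hi, smul_zero]]
  refine ⟨insert 0 S, c, Finset.mem_insert_self 0 S, ?_, hsum⟩
  rw [hsum, Finset.sum_eq_single 0 (fun i _ hi => ?_)
    (fun h => absurd (Finset.mem_insert_self 0 S) h)]
  · simp
  · obtain ⟨l, hl⟩ : ∃ l, i l ≠ 0 := by simpa [funext_iff] using hi
    rw [Finset.prod_eq_zero (Finset.mem_univ l) (by simp [hl]), zero_smul]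

end polynomialMaps

end PolynomialMaps

section AddMonoidHom

variable {ι : Type*} [DecidableEq ι] (ε : (ι → ℤ) →+ ℂ)

theorem Pi.single_add_update {M : Type*} [AddZeroClass M] (m : ι → M) (j : ι) (w z : M) :
    Pi.single j w + update m j z = update m j (w + z) := by
  funext i
  by_cases hij : i = j
  · subst hij; simp
  · simp [hij]

theorem AddMonoidHom.map_single (j : ι) (z : ℤ) :
    ε (Pi.single j z) = z * ε (Pi.single j 1) := by
  rw [← zsmul_eq_mul, ← map_zsmul, ← Pi.single_smul, smul_eq_mul, mul_one]

theorem AddMonoidHom.map_update (m : ι → ℤ) (j : ι) (z : ℤ) :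
    ε (update m j z) = ε (update m j 0) + z * ε (Pi.single j 1) := by
  rw [← ε.map_single, ← map_add, add_comm, Pi.single_add_update, add_zero]

variable {ε}

theorem AddMonoidHom.map_update_zero_ne (hε : Injective ε) {m : ι → ℤ} (hm : m ≠ 0) (j : ι) :
    ε (update m j 0) ≠ ε (Pi.single j (m j)) := by
  intro h
  have h' := hε h
  have hj : m j = 0 := by simpa using (congrFun h' j).symm
  exact hm (by rw [← update_eq_self j m, hj, h', hj, Pi.single_zero])

theorem AddMonoidHom.map_single_one_ne_zero (hε : Injective ε) (j : ι) :
    ε (Pi.single j 1) ≠ 0 := fun h => by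
  simpa using congrFun (hε (h.trans (map_zero ε).symm)) j

variable [Fintype ι] (ε)

def AddMonoidHom.complexExtension (x : ι → ℂ) : ℂ :=
  ∑ l, x l * ε (Pi.single l 1)

theorem AddMonoidHom.complexExtension_mem : ε.complexExtension ∈ polynomialMaps ι ℂ :=
  polynomialMaps.sum_mem' _ fun l _ =>
    polynomialMaps.mul_mem' (polynomialMaps.coord_mem l) (polynomialMaps.const_mem _)

theorem AddMonoidHom.complexExtension_intCast (m : ι → ℤ) :
    ε.complexExtension (Int.cast ∘ m) = ε m := by
  conv_rhs => rw [← Finset.univ_sum_single m]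
  rw [map_sum]
  exact Finset.sum_congr rfl fun l _ => (ε.map_single l (m l)).symm

end AddMonoidHom

section BracketRelation

variable {ι A : Type*} [DecidableEq ι] [Ring A] [Algebra ℂ A]

def BracketRelation (ε : (ι → ℤ) →+ ℂ) (D : (ι → ℤ) → A) : Prop :=
  ∀ s m, ⁅D s, D m⁆ = (ε m - ε s) • D (s + m) - ε m • D m + ε s • D s

variable {ε : (ι → ℤ) →+ ℂ} {D : (ι → ℤ) → A}

open polynomialMaps

theorem BracketRelation.smul_eq (hbr : BracketRelation ε D) (m : ι → ℤ) (j : ι) :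
    (ε (update m j 0) - ε (Pi.single j (m j))) • D m
      = ⁅D (Pi.single j (m j)), D (update m j 0)⁆ + ε (update m j 0) • D (update m j 0)
        - ε (Pi.single j (m j)) • D (Pi.single j (m j)) := by
  rw [hbr, Pi.single_add_update, add_zero, update_eq_self]
  abel

theorem BracketRelation.apply_update_div_eq_zero (hε : Injective ε) (hbr : BracketRelation ε D)
    {P : (ι → ℂ) → A} (hP : P ∈ polynomialMaps ι A) (m : ι → ℤ) (j : ι)
    (hPD : ∀ z : ℤ, P (update (Int.cast ∘ m) j z)
      = (ε (update m j 0) - ε (Pi.single j 1) * z) • D (update m j z)) :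
    P (update (Int.cast ∘ m) j (ε (update m j 0) / ε (Pi.single j 1))) = 0 := by
  have hαb : ε (update m j 0) ≠ ε (Pi.single j 1) := by
    simpa using ε.map_update_zero_ne hε (m := update m j 1)
      (fun h => by simpa using congrFun h j) j
  refine polynomialMaps.apply_update_div_eq_zero hP _ j (u := D (Pi.single j 1))
    (ε.map_single_one_ne_zero hε j) hαb hPD fun z => ?_
  rw [hbr, Pi.single_add_update, add_sub_cancel, ε.map_update m j (z - 1)]
  push_cast
  rfl

theorem exists_polynomialMap_smul_eq [Fintype ι] (hbr : BracketRelation ε D) (T : Finset ι)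
    (j : ι) {G : (ι → ℂ) → A} (hG : G ∈ polynomialMaps ι A)
    (hDG : ∀ m : ι → ℤ, (∀ i ∉ T, m i = 0) → D m = G (Int.cast ∘ m))
    {a : ℂ → A} (ha : (fun x => a (x j)) ∈ polynomialMaps ι A)
    (hDa : ∀ z : ℤ, D (Pi.single j z) = a z) :
    ∃ P ∈ polynomialMaps ι A, ∀ m : ι → ℤ, (∀ i ∉ insert j T, m i = 0) →
      P (Int.cast ∘ m) = (ε (update m j 0) - ε (Pi.single j 1) * m j) • D m := by
  have hG' : (fun x => G (update x j 0)) ∈ polynomialMaps ι A :=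
    comp_update_mem hG (fun i => coord_mem i) j (const_mem 0)
  refine ⟨fun x => ⁅a (x j), G (update x j 0)⁆
      + ε.complexExtension (update x j 0) • G (update x j 0) - (x j * ε (Pi.single j 1)) • a (x j),
    sub_mem' (add_mem' (lie_mem ha hG') (smul_mem' (comp_update_mem ε.complexExtension_mem
      (fun i => coord_mem i) j (const_mem 0)) hG'))
      (smul_mem' (mul_mem' (coord_mem j) (const_mem _)) ha), fun m hm => ?_⟩
  have hT : ∀ i ∉ T, update m j 0 i = 0 := fun i hi => by
    by_cases hij : i = j
    · simp [hij]
    · simpa [hij] using hm i (by simp [hij, hi])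
  have hupd : update (Int.cast ∘ m) j 0 = (Int.cast ∘ update m j 0 : ι → ℂ) := by
    rw [comp_update, Int.cast_zero]
  rw [mul_comm, ← ε.map_single, hbr.smul_eq]
  simp only [comp_apply, hupd, ← hDG _ hT, ε.complexExtension_intCast, hDa]
  rw [ε.map_single j (m j)]

theorem exists_polynomialMap_insert [Fintype ι] (hε : Injective ε) (hbr : BracketRelation ε D)
    (T : Finset ι) (j : ι) {G : (ι → ℂ) → A} (hG : G ∈ polynomialMaps ι A)
    (hDG : ∀ m : ι → ℤ, (∀ i ∉ T, m i = 0) → D m = G (Int.cast ∘ m))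
    {a : ℂ → A} (ha : (fun x => a (x j)) ∈ polynomialMaps ι A)
    (hDa : ∀ z : ℤ, D (Pi.single j z) = a z) :
    ∃ F ∈ polynomialMaps ι A,
      ∀ m : ι → ℤ, (∀ i ∉ insert j T, m i = 0) → D m = F (Int.cast ∘ m) := by
  obtain ⟨P, hP, hPD⟩ := exists_polynomialMap_smul_eq hbr T j hG hDG ha hDa
  have hα : ∀ m : ι → ℤ, ε.complexExtension (update (Int.cast ∘ m) j 0) = ε (update m j 0) :=
    fun m => by rw [← Int.cast_zero, ← comp_update, ε.complexExtension_intCast]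
  obtain ⟨Q, hQ, hDQ⟩ := exists_eq_of_smul_eq hP (comp_update_mem ε.complexExtension_mem
    (fun i => coord_mem i) j (const_mem 0)) (ε.map_single_one_ne_zero hε j) j
  have hDQ' : ∀ m : ι → ℤ, (∀ i ∉ insert j T, m i = 0) → m ≠ 0 →
      D m = Q (Int.cast ∘ m) := by
    intro m hm hm0
    refine hDQ _ _ ?_ (by rw [hα]; exact hPD m hm) ?_
    · rw [hα]
      refine hbr.apply_update_div_eq_zero hε hP m j fun z => ?_
      have hmz := hPD (update m j z) fun i hi => by
        rw [update_of_ne (by rintro rfl; exact hi (Finset.mem_insert_self i T))]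
        exact hm i hi
      rwa [update_idem, update_self, comp_update] at hmz
    · rw [hα, comp_apply, mul_comm, ← ε.map_single]
      exact ε.map_update_zero_ne hε hm0 j
  have hQ0 : Q 0 = D 0 := by
    rw [apply_zero_eq_of_apply_single hQ ha fun z hz => ?_, ← Int.cast_zero, ← hDa,
      Pi.single_zero]
    rw [← hDa, hDQ' _ (fun i hi => ?_) (Pi.single_ne_zero_iff.mpr hz)]
    · congr 1
      funext i
      by_cases hij : i = j
      · subst hij; simp
      · simp [hij]
    · have hij : i ≠ j := by rintro rfl; exact hi (Finset.mem_insert_self i T)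
      simp [hij]
  refine ⟨Q, hQ, fun m hm => ?_⟩
  rcases eq_or_ne m 0 with rfl | hm0
  · rw [show (Int.cast ∘ 0 : ι → ℂ) = 0 by ext; simp]
    exact hQ0.symm
  · exact hDQ' m hm hm0

theorem exists_polynomialMap [Fintype ι] (hε : Injective ε) (hbr : BracketRelation ε D)
    (hD : ∀ j, ∃ a : ℂ → A, (fun x => a (x j)) ∈ polynomialMaps ι A ∧
      ∀ z : ℤ, D (Pi.single j z) = a z) :
    ∃ F ∈ polynomialMaps ι A, ∀ m : ι → ℤ, D m = F (Int.cast ∘ m) := by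
  suffices ∀ T : Finset ι, ∃ F ∈ polynomialMaps ι A,
      ∀ m : ι → ℤ, (∀ i ∉ T, m i = 0) → D m = F (Int.cast ∘ m) by
    obtain ⟨F, hF, hDF⟩ := this Finset.univ
    exact ⟨F, hF, fun m => hDF m fun i hi => absurd (Finset.mem_univ i) hi⟩
  intro T
  induction T using Finset.induction_on with
  | empty =>
    refine ⟨fun _ => D 0, const_mem _, fun m hm => ?_⟩
    rw [show m = 0 from funext fun i => hm i (Finset.notMem_empty i)]
  | insert j T _ ih =>
    obtain ⟨G, hG, hDG⟩ := ih
    obtain ⟨a, ha, hDa⟩ := hD j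
    exact exists_polynomialMap_insert hε hbr T j hG hDG ha hDa

end BracketRelation

theorem stmt4_general (k : ℕ) (ε : (Fin k → ℤ) →+ ℂ) (hε : Function.Injective ε)
    (W : Type*) [AddCommGroup W] [Module ℂ W]
    (D : (Fin k → ℤ) → Module.End ℂ W)
    (hbr : ∀ s m : Fin k → ℤ,
      ⁅D s, D m⁆ = (ε m - ε s) • D (s + m) - ε m • D m + ε s • D s)
    (hpoly : ∀ j : Fin k, ∃ (n : ℕ) (c : ℕ → Module.End ℂ W),
      ∀ z : ℤ, D (Pi.single j z) = ∑ i ∈ Finset.range n, (z : ℂ) ^ i • c i) :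
    ∃ (S : Finset (Fin k → ℕ)) (c : (Fin k → ℕ) → Module.End ℂ W),
      (0 : Fin k → ℕ) ∈ S ∧ c 0 = D 0 ∧
      ∀ m : Fin k → ℤ, D m = ∑ i ∈ S, (∏ l, ((m l : ℂ)) ^ (i l)) • c i := by
  obtain ⟨F, hF, hDF⟩ := exists_polynomialMap hε hbr fun j => by
    obtain ⟨n, c, hc⟩ := hpoly j
    refine ⟨fun z => ∑ i ∈ Finset.range n, z ^ i • c i,
      polynomialMaps.sum_mem' _ fun i _ => ?_, hc⟩
    simpa using polynomialMaps.eval_smul_mem (X j ^ i) (c i)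
  obtain ⟨S, c, h0, hc0, hFc⟩ := polynomialMaps.exists_sum_prod_pow_smul_of_zero_mem hF
  refine ⟨S, c, h0, ?_, fun m => by rw [hDF, hFc]; rfl⟩
  rw [hc0, hDF]
  congr 1
  ext; simp

/-- Let `W` be a finite-dimensional vector space and
`D : ℤᵏ → End(W)` a family of operators satisfying
`[D(s), D(m)] = (m−s)D(s+m) − m·D(m) + s·D(s)` (scalars via the injective embedding
`ε : ℤᵏ →+ ℂ`). If each `D(m_j ε_j)` is a polynomial in `m_j` with `End(W)`
coefficients, then `D(m)` is an `End(W)`-valued polynomial in the coordinates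
`(m₁,…,m_k)` of `m`, with constant term `D(0)`. -/
theorem stmt4 (k : ℕ) (ε : (Fin k → ℤ) →+ ℂ) (hε : Function.Injective ε)
    (W : Type*) [AddCommGroup W] [Module ℂ W] [FiniteDimensional ℂ W]
    (D : (Fin k → ℤ) → Module.End ℂ W)
    (hbr : ∀ s m : Fin k → ℤ,
      ⁅D s, D m⁆ = (ε m - ε s) • D (s + m) - ε m • D m + ε s • D s)
    (hpoly : ∀ j : Fin k, ∃ (n : ℕ) (c : ℕ → Module.End ℂ W),
      ∀ z : ℤ, D (Pi.single j z) = ∑ i ∈ Finset.range n, (z : ℂ) ^ i • c i) :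
    ∃ (S : Finset (Fin k → ℕ)) (c : (Fin k → ℕ) → Module.End ℂ W),
      (0 : Fin k → ℕ) ∈ S ∧ c 0 = D 0 ∧
      ∀ m : Fin k → ℤ, D m = ∑ i ∈ S, (∏ l, ((m l : ℂ)) ^ (i l)) • c i :=
  stmt4_general k ε hε W D hbr hpoly
end

section
/- Suppose D(m) = Σ_{i∈ℕᵏ} (m^i / i!) D^{(i)} (a finite sum of End(W)-valued coefficients, m ∈ ℤᵏ with coordinates m₁,…,m_k, m^i = m₁^{i₁}⋯m_k^{i_k}) satisfies [D(s), D(m)] = (m−s)D(s+m) − m·D(m) + s·D(s) for all s, m ∈ ℤᵏ. Then the coefficients satisfy [D^{(i)}, D^{(j)}] = Σ_{l=1}^k (j_l − i_l)ε_l · D^{(i+j−ε_l)} for i, j ∈ ℕᵏ∖{0}, and [D^{(i)}, D^{(j)}] = 0 if i = 0 or j = 0. -/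
/-!
Both sides of `[D(s), D(m)] = (m−s)D(s+m) − m·D(m) + s·D(s)` are polynomial in `(s, m) ∈ ℤᵏ × ℤᵏ`,
so we expand them in the divided monomials `sⁱ mʲ / (i! j!)` and compare coefficients, which is
legitimate because a polynomial over a field of characteristic zero vanishing on `ℤᵏ` is zero.
The factor `D(s+m)` is expanded with the binomial formula `(s+m)ᵖ/p! = Σ_{i+j=p} sⁱ/i! · mʲ/j!`,
and multiplication by `m_l` shifts the index: `m_l · mʲ/j! = (j_l + 1) · m^{j+e_l}/(j+e_l)!`.
The terms `m·D(m)` and `s·D(s)` only contribute to the coefficients with `i = 0`, resp. `j = 0`.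
-/

open Finset Nat

lemma single_one_le_of_ne_zero {ι : Type*} [DecidableEq ι] {j : ι → ℕ} {l : ι} (h : j l ≠ 0) :
    Pi.single l 1 ≤ j := by
  intro l'
  rcases eq_or_ne l' l with rfl | hl
  · simpa [Nat.one_le_iff_ne_zero] using h
  · simp [hl]

lemma lie_sum_smul_sum {R A ι κ : Type*} [CommSemiring R] [Ring A] [Algebra R A]
    (s : Finset ι) (t : Finset κ) (a : ι → R) (b : κ → R) (f : ι → A) (g : κ → A) :
    ⁅∑ i ∈ s, a i • f i, ∑ j ∈ t, b j • g j⁆ = ∑ i ∈ s, ∑ j ∈ t, (a i * b j) • ⁅f i, g j⁆ := by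
  rw [Ring.lie_def, sum_mul_sum, sum_mul_sum, sum_comm (s := t), ← sum_sub_distrib]
  refine sum_congr rfl fun i _ => ?_
  simp only [Ring.lie_def, smul_sub, smul_mul_smul_comm, mul_comm (b _), sum_sub_distrib]

noncomputable def dividedMonomial (K : Type*) [Field K] {k : ℕ} (m : Fin k → ℤ) (i : Fin k → ℕ) :
    K :=
  ∏ l, (m l : K) ^ i l / (i l)!

section DividedMonomial

variable {K : Type*} [Field K] {k : ℕ}

@[simp]
lemma dividedMonomial_zero (m : Fin k → ℤ) : dividedMonomial K m 0 = 1 := by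
  simp [dividedMonomial]

lemma eval_sum_monomial_eq_sum_dividedMonomial (T : Finset (Fin k → ℕ)) (a : (Fin k → ℕ) → K)
    (m : Fin k → ℤ) :
    MvPolynomial.eval (fun l => (m l : K))
      (∑ i ∈ T, MvPolynomial.monomial (Finsupp.equivFunOnFinite.symm i)
        (a i * ∏ l, ((i l)! : K)⁻¹)) = ∑ i ∈ T, dividedMonomial K m i * a i := by
  simp only [map_sum, MvPolynomial.eval_monomial, Finsupp.prod_fintype _ _ (fun _ => pow_zero _),
    Finsupp.coe_equivFunOnFinite_symm, dividedMonomial, div_eq_mul_inv, prod_mul_distrib]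
  exact sum_congr rfl fun i _ => by ring

variable [CharZero K]

lemma dividedMonomial_add_single (m : Fin k → ℤ) (j : Fin k → ℕ) (l : Fin k) :
    ((j l : K) + 1) * dividedMonomial K m (j + Pi.single l 1) = m l * dividedMonomial K m j := by
  have hfactor : ∀ l', (m l' : K) ^ (j + Pi.single l 1 : Fin k → ℕ) l' /
      ((j + Pi.single l 1 : Fin k → ℕ) l')! =
      (m l' : K) ^ j l' / (j l')! * if l' = l then (m l : K) / (j l + 1) else 1 := by
    intro l'
    rcases eq_or_ne l' l with rfl | hl
    · simp [pow_succ, factorial_succ]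
      field_simp
    · simp [hl]
  simp only [dividedMonomial, hfactor, prod_mul_distrib, prod_ite_eq', mem_univ, if_true]
  field_simp

lemma add_pow_div_factorial (x y : K) (n : ℕ) :
    (x + y) ^ n / n ! = ∑ t ∈ Iic n, x ^ t / t ! * (y ^ (n - t) / (n - t)!) := by
  rw [add_pow, sum_div, ← Nat.range_succ_eq_Iic]
  refine sum_congr rfl fun t ht => ?_
  rw [Nat.cast_choose K (Nat.lt_succ_iff.1 (mem_range.1 ht))]
  field_simp [factorial_ne_zero]

lemma dividedMonomial_add (s m : Fin k → ℤ) (p : Fin k → ℕ) :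
    dividedMonomial K (s + m) p =
      ∑ i ∈ Iic p, dividedMonomial K s i * dividedMonomial K m (p - i) := by
  simp only [dividedMonomial, Pi.add_apply, Int.cast_add, add_pow_div_factorial]
  rw [prod_univ_sum]
  simp only [← prod_mul_distrib]
  rfl

lemma eq_zero_of_forall_sum_dividedMonomial_mul_eq_zero {T : Finset (Fin k → ℕ)}
    {a : (Fin k → ℕ) → K} (h : ∀ m : Fin k → ℤ, ∑ i ∈ T, dividedMonomial K m i * a i = 0) :
    ∀ i ∈ T, a i = 0 := by
  set P : MvPolynomial (Fin k) K := ∑ i ∈ T, MvPolynomial.monomial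
    (Finsupp.equivFunOnFinite.symm i) (a i * ∏ l, ((i l)! : K)⁻¹)
  have hP : P = 0 := by
    refine MvPolynomial.funext_set (fun _ => Set.range ((↑) : ℤ → K))
      (fun _ => Set.infinite_range_of_injective Int.cast_injective) fun x hx => ?_
    choose m hm using hx
    obtain rfl : (fun l => (m l (Set.mem_univ l) : K)) = x := funext fun l => hm l _
    rw [eval_sum_monomial_eq_sum_dividedMonomial, h, map_zero]
  intro i hi
  have hcoeff := congrArg (MvPolynomial.coeff (Finsupp.equivFunOnFinite.symm i)) hP
  simp only [P, MvPolynomial.coeff_sum, MvPolynomial.coeff_monomial,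
    Finsupp.equivFunOnFinite.symm.injective.eq_iff, sum_ite_eq', if_pos hi,
    MvPolynomial.coeff_zero] at hcoeff
  simpa [prod_eq_zero_iff, factorial_ne_zero] using hcoeff

variable {V : Type*} [AddCommGroup V] [Module K V]

lemma eq_zero_of_forall_sum_dividedMonomial_smul_eq_zero {T : Finset (Fin k → ℕ)}
    {c : (Fin k → ℕ) → V} (h : ∀ m : Fin k → ℤ, ∑ i ∈ T, dividedMonomial K m i • c i = 0) :
    ∀ i ∈ T, c i = 0 := by
  intro i hi
  rw [← Module.forall_dual_apply_eq_zero_iff K]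
  intro f
  refine eq_zero_of_forall_sum_dividedMonomial_mul_eq_zero (a := fun i => f (c i))
    (fun m => ?_) i hi
  simpa using congrArg f (h m)

lemma eq_zero_of_forall_sum_sum_dividedMonomial_smul_eq_zero {T T' : Finset (Fin k → ℕ)}
    {c : (Fin k → ℕ) → (Fin k → ℕ) → V}
    (h : ∀ s m : Fin k → ℤ,
      ∑ i ∈ T, ∑ j ∈ T', (dividedMonomial K s i * dividedMonomial K m j) • c i j = 0) :
    ∀ i ∈ T, ∀ j ∈ T', c i j = 0 := by
  have hinner : ∀ s, ∀ j ∈ T', ∑ i ∈ T, dividedMonomial K s i • c i j = 0 := by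
    intro s
    refine eq_zero_of_forall_sum_dividedMonomial_smul_eq_zero (K := K) fun m => ?_
    rw [← h s m, sum_comm]
    simp only [smul_sum, smul_smul, mul_comm]
  exact fun i hi j hj => eq_zero_of_forall_sum_dividedMonomial_smul_eq_zero
    (fun s => hinner s j hj) i hi

lemma sum_dividedMonomial_add_smul (s m : Fin k → ℤ) {b : Fin k → ℕ} {c : (Fin k → ℕ) → V}
    (hc : ∀ p, c p ≠ 0 → p ≤ b) :
    ∑ p ∈ Iic b, dividedMonomial K (s + m) p • c p =
      ∑ i ∈ Iic b, ∑ j ∈ Iic b, (dividedMonomial K s i * dividedMonomial K m j) • c (i + j) := by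
  calc ∑ p ∈ Iic b, dividedMonomial K (s + m) p • c p
      = ∑ p ∈ Iic b, ∑ i ∈ Iic p,
          (dividedMonomial K s i * dividedMonomial K m (p - i)) • c p := by
        simp only [dividedMonomial_add, sum_smul]
    _ = ∑ i ∈ Iic b, ∑ p ∈ Icc i b,
          (dividedMonomial K s i * dividedMonomial K m (p - i)) • c p :=
        sum_comm' fun p i => by
          simp only [mem_Iic, mem_Icc]
          exact ⟨fun h => ⟨⟨h.2, h.1⟩, h.2.trans h.1⟩, fun h => ⟨h.1.2, h.1.1⟩⟩
    _ = ∑ i ∈ Iic b, ∑ j ∈ Iic (b - i),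
          (dividedMonomial K s i * dividedMonomial K m j) • c (i + j) := by
        refine sum_congr rfl fun i hi => ?_
        have hIcc : Icc i b = (Iic (b - i)).map (addLeftEmbedding i) := by
          ext p
          simp only [mem_Icc, mem_map, mem_Iic, addLeftEmbedding_apply]
          constructor
          · exact fun h => ⟨p - i, tsub_le_tsub_right h.2 i, add_tsub_cancel_of_le h.1⟩
          · rintro ⟨j, hj, rfl⟩
            exact ⟨le_self_add, (le_tsub_iff_left (mem_Iic.1 hi)).1 hj⟩
        simp [hIcc]
    _ = _ := by
        refine sum_congr rfl fun i hi => sum_subset (Iic_subset_Iic.2 tsub_le_self) fun j _ hj => ?_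
        rw [mem_Iic, le_tsub_iff_left (mem_Iic.1 hi)] at hj
        rw [not_ne_iff.1 (mt (hc _) hj), smul_zero]

lemma smul_sum_dividedMonomial_smul (m : Fin k → ℤ) (l : Fin k) {i b : Fin k → ℕ}
    {c : (Fin k → ℕ) → V} (hc : ∀ j, c (i + j) ≠ 0 → j + Pi.single l 1 ≤ b) :
    (m l : K) • ∑ j ∈ Iic b, dividedMonomial K m j • c (i + j) =
      ∑ j ∈ Iic b, dividedMonomial K m j • ((j l : K) • c (i + j - Pi.single l 1)) := by
  have hshift : ∀ j, (m l : K) • dividedMonomial K m j • c (i + j) =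
      dividedMonomial K m (j + Pi.single l 1) •
        (((j + Pi.single l 1 : Fin k → ℕ) l : K) •
          c (i + (j + Pi.single l 1) - Pi.single l 1)) := by
    intro j
    rw [← add_assoc, add_tsub_cancel_right, smul_smul, smul_smul, ← dividedMonomial_add_single]
    simp [mul_comm]
  rw [smul_sum]
  refine sum_bij_ne_zero (fun j _ _ => j + Pi.single l 1) (fun j _ hj => ?_)
    (fun _ _ _ _ _ _ h => add_right_cancel h) (fun j hj hne => ?_) (fun j _ _ => hshift j)
  · exact mem_Iic.2 (hc j fun h => hj (by rw [h, smul_zero, smul_zero]))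
  · have hle : Pi.single l 1 ≤ j :=
      single_one_le_of_ne_zero fun h => hne (by rw [h, Nat.cast_zero, zero_smul, smul_zero])
    refine ⟨j - Pi.single l 1, mem_Iic.2 (tsub_le_self.trans (mem_Iic.1 hj)), ?_,
      tsub_add_cancel_of_le hle⟩
    rwa [hshift, tsub_add_cancel_of_le hle]

end DividedMonomial

section Bracket

variable {K : Type*} [Field K] {k : ℕ} {A : Type*} [Ring A] [Algebra K A]

def lowering (ε : Fin k → K) (Dc : (Fin k → ℕ) → A) (i j : Fin k → ℕ) : A :=
  ∑ l, ((j l : K) * ε l) • Dc (i + j - Pi.single l 1)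

/-- The coefficient of `sⁱ mʲ / (i! j!)` on the right-hand side of the bracket relation; the two
`if` terms come from `m·D(m)` and `s·D(s)`. -/
def coeffBracket (ε : Fin k → K) (Dc : (Fin k → ℕ) → A) (i j : Fin k → ℕ) : A :=
  lowering ε Dc i j - lowering ε Dc j i
    - (if i = 0 then lowering ε Dc 0 j else 0) + (if j = 0 then lowering ε Dc 0 i else 0)

variable [CharZero K] (ε : Fin k → K) {b : Fin k → ℕ} {Dc : (Fin k → ℕ) → A}
  -- the margin of one in every coordinate makes room for the shifts `j ↦ j + eₗ`
  (hDc : ∀ p, Dc p ≠ 0 → p + 1 ≤ b)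
include hDc

lemma weight_smul_sum_eq_sum_smul_lowering (m : Fin k → ℤ) (i : Fin k → ℕ) :
    (∑ l, (m l : K) * ε l) • ∑ j ∈ Iic b, dividedMonomial K m j • Dc (i + j) =
      ∑ j ∈ Iic b, dividedMonomial K m j • lowering ε Dc i j := by
  have hshift : ∀ l, ∀ j, Dc (i + j) ≠ 0 → j + Pi.single l 1 ≤ b := fun l j hj =>
    (_root_.add_le_add le_add_self (single_one_le_of_ne_zero (j := 1) one_ne_zero)).trans
      (hDc _ hj)
  rw [sum_smul]
  simp_rw [mul_comm (m _ : K), mul_smul, smul_sum_dividedMonomial_smul m _ (hshift _)]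
  simp only [lowering, smul_sum, mul_comm (_ : K) (ε _), mul_smul]
  rw [sum_comm]
  simp only [smul_comm (ε _) (dividedMonomial K m _)]

lemma weight_smul_add_eq_sum_sum_smul_lowering (s m : Fin k → ℤ) :
    (∑ l, (m l : K) * ε l) • ∑ p ∈ Iic b, dividedMonomial K (s + m) p • Dc p =
      ∑ i ∈ Iic b, ∑ j ∈ Iic b,
        (dividedMonomial K s i * dividedMonomial K m j) • lowering ε Dc i j := by
  rw [sum_dividedMonomial_add_smul s m fun p hp => le_self_add.trans (hDc p hp), smul_sum]
  simp only [mul_smul, ← smul_sum, smul_comm (∑ l, (m l : K) * ε l),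
    weight_smul_sum_eq_sum_smul_lowering ε hDc]

theorem lie_eq_coeffBracket {D : (Fin k → ℤ) → A}
    (hD : ∀ m, D m = ∑ p ∈ Iic b, dividedMonomial K m p • Dc p)
    (hbr : ∀ s m : Fin k → ℤ,
      ⁅D s, D m⁆ = ((∑ l, (m l : K) * ε l) - ∑ l, (s l : K) * ε l) • D (s + m)
        - (∑ l, (m l : K) * ε l) • D m + (∑ l, (s l : K) * ε l) • D s)
    {i j : Fin k → ℕ} (hi : i ≤ b) (hj : j ≤ b) :
    ⁅Dc i, Dc j⁆ = coeffBracket ε Dc i j := by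
  have hmix : ∀ s m : Fin k → ℤ, (∑ l, (m l : K) * ε l) • D (s + m) =
      ∑ i ∈ Iic b, ∑ j ∈ Iic b,
        (dividedMonomial K s i * dividedMonomial K m j) • lowering ε Dc i j := fun s m => by
    rw [hD]
    exact weight_smul_add_eq_sum_sum_smul_lowering ε hDc s m
  have hmix' : ∀ s m : Fin k → ℤ, (∑ l, (s l : K) * ε l) • D (s + m) =
      ∑ i ∈ Iic b, ∑ j ∈ Iic b,
        (dividedMonomial K s i * dividedMonomial K m j) • lowering ε Dc j i := fun s m => by
    rw [add_comm, hmix m s, sum_comm]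
    simp only [mul_comm]
  have hdiag : ∀ m : Fin k → ℤ, (∑ l, (m l : K) * ε l) • D m =
      ∑ j ∈ Iic b, dividedMonomial K m j • lowering ε Dc 0 j := fun m => by
    simpa [← hD] using weight_smul_sum_eq_sum_smul_lowering ε hDc m 0
  have hdiag_left : ∀ s m : Fin k → ℤ, ∑ i ∈ Iic b, ∑ j ∈ Iic b,
      (dividedMonomial K s i * dividedMonomial K m j) •
        (if i = 0 then lowering ε Dc 0 j else 0) = (∑ l, (m l : K) * ε l) • D m := fun s m => by
    rw [sum_comm]
    simp [smul_ite, hdiag]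
  have hdiag_right : ∀ s m : Fin k → ℤ, ∑ i ∈ Iic b, ∑ j ∈ Iic b,
      (dividedMonomial K s i * dividedMonomial K m j) •
        (if j = 0 then lowering ε Dc 0 i else 0) = (∑ l, (s l : K) * ε l) • D s := fun s m => by
    simp [smul_ite, hdiag]
  refine sub_eq_zero.1 (eq_zero_of_forall_sum_sum_dividedMonomial_smul_eq_zero (K := K)
    (c := fun i j => ⁅Dc i, Dc j⁆ - coeffBracket ε Dc i j) (fun s m => ?_) i (mem_Iic.2 hi) j
    (mem_Iic.2 hj))
  simp only [coeffBracket, smul_sub, smul_add, sum_sub_distrib, sum_add_distrib]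
  rw [← lie_sum_smul_sum, ← hD, ← hD, hbr, sub_smul, hmix, hmix', hdiag_left, hdiag_right]
  abel

end Bracket

theorem stmt5_general (k : ℕ) (ε : Fin k → ℂ)
    (W : Type*) [AddCommGroup W] [Module ℂ W]
    (S : Finset (Fin k → ℕ)) (Dc : (Fin k → ℕ) → Module.End ℂ W)
    (hsupp : ∀ i ∉ S, Dc i = 0)
    (D : (Fin k → ℤ) → Module.End ℂ W)
    (hD : ∀ m : Fin k → ℤ,
      D m = ∑ i ∈ S, (∏ l, ((m l : ℂ)) ^ (i l) / (Nat.factorial (i l))) • Dc i)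
    (hbr : ∀ s m : Fin k → ℤ,
      ⁅D s, D m⁆ = ((∑ l, (m l : ℂ) * ε l) - ∑ l, (s l : ℂ) * ε l) • D (s + m)
        - (∑ l, (m l : ℂ) * ε l) • D m + (∑ l, (s l : ℂ) * ε l) • D s) :
    (∀ i j : Fin k → ℕ, i ≠ 0 → j ≠ 0 →
      ⁅Dc i, Dc j⁆ = ∑ l, (((j l : ℂ) - (i l : ℂ)) * ε l) • Dc (i + j - Pi.single l 1)) ∧
    (∀ i j : Fin k → ℕ, i = 0 ∨ j = 0 → ⁅Dc i, Dc j⁆ = 0) := by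
  have hlie : ∀ i j, ⁅Dc i, Dc j⁆ = coeffBracket ε Dc i j := by
    intro i j
    set b : Fin k → ℕ := ∑ p ∈ S, p + i + j + 1
    have hSb : ∀ p ∈ S, p + 1 ≤ b := fun p hp =>
      add_le_add_left (le_add_right (le_add_right (single_le_sum (f := id) (by simp) hp))) 1
    have hDc : ∀ p, Dc p ≠ 0 → p + 1 ≤ b := fun p hp => hSb p (not_imp_comm.1 (hsupp p) hp)
    refine lie_eq_coeffBracket ε hDc (fun m => ?_) hbr
      (le_add_right (le_add_right le_add_self)) (le_add_right le_add_self)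
    rw [hD m]
    exact sum_subset (fun p hp => mem_Iic.2 (le_self_add.trans (hSb p hp)))
      fun p _ hp => by rw [hsupp p hp, smul_zero]
  refine ⟨fun i j hi hj => ?_, ?_⟩
  · rw [hlie, coeffBracket, if_neg hi, if_neg hj, lowering, lowering, add_comm j,
      ← sum_sub_distrib]
    simp [sub_mul, sub_smul]
  · rintro i j (rfl | rfl) <;> simp [hlie, coeffBracket, lowering]

/-- Suppose `D(m) = Σ_{i∈ℕᵏ} (mⁱ/i!) D⁽ⁱ⁾` (a finite sum, with
`mⁱ = m₁^{i₁}⋯m_k^{i_k}`, coefficients `D⁽ⁱ⁾ ∈ End(W)`) satisfies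
`[D(s), D(m)] = (m−s)D(s+m) − m·D(m) + s·D(s)` for all `s, m ∈ ℤᵏ`, where the scalar
associated to `m` is `Σ_l m_l ε_l` for `ε₁,…,ε_k ∈ ℂ` linearly independent over `ℚ`.
Then `[D⁽ⁱ⁾, D⁽ʲ⁾] = Σ_{l=1}^k (j_l − i_l) ε_l · D⁽ⁱ⁺ʲ⁻ᵉˡ⁾` for `i, j ∈ ℕᵏ∖{0}`
(terms with a negative coordinate being zero, which the vanishing coefficient handles),
and `[D⁽ⁱ⁾, D⁽ʲ⁾] = 0` if `i = 0` or `j = 0`. -/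
theorem stmt5 (k : ℕ) (ε : Fin k → ℂ) (hε : LinearIndependent ℚ ε)
    (W : Type*) [AddCommGroup W] [Module ℂ W] [FiniteDimensional ℂ W]
    (S : Finset (Fin k → ℕ)) (Dc : (Fin k → ℕ) → Module.End ℂ W)
    (hsupp : ∀ i ∉ S, Dc i = 0)
    (D : (Fin k → ℤ) → Module.End ℂ W)
    (hD : ∀ m : Fin k → ℤ,
      D m = ∑ i ∈ S, (∏ l, ((m l : ℂ)) ^ (i l) / (Nat.factorial (i l))) • Dc i)
    (hbr : ∀ s m : Fin k → ℤ,
      ⁅D s, D m⁆ = ((∑ l, (m l : ℂ) * ε l) - ∑ l, (s l : ℂ) * ε l) • D (s + m)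
        - (∑ l, (m l : ℂ) * ε l) • D m + (∑ l, (s l : ℂ) * ε l) • D s) :
    (∀ i j : Fin k → ℕ, i ≠ 0 → j ≠ 0 →
      ⁅Dc i, Dc j⁆ = ∑ l, (((j l : ℂ) - (i l : ℂ)) * ε l) • Dc (i + j - Pi.single l 1)) ∧
    (∀ i j : Fin k → ℕ, i = 0 ∨ j = 0 → ⁅Dc i, Dc j⁆ = 0) :=
  stmt5_general k ε W S Dc hsupp D hD hbr
end

section
/- In the universal enveloping algebra of the centerless high rank W-algebra W(2,2), for any α, β, s ∈ ℤᵏ and γ ∈ ℤᵏ∖{0}, the combination [Ω_{α,β−γ}^{(l,γ)}, W_{s+γ}] − 2[Ω_{α,β}^{(l,γ)}, W_s] + [Ω_{α,β+γ}^{(l,γ)}, W_{s−γ}] − [Ω_{α+γ,β−γ}^{(l,γ)}, W_s] + 2[Ω_{α+γ,β}^{(l,γ)}, W_{s−γ}] − [Ω_{α+γ,β+γ}^{(l,γ)}, W_{s−2γ}] equals 2γ · Σ_{i=0}^{l+2} (−1)^i C(l+2,i) W_{α+s−(i−1)γ} L_{β+(i−1)γ}, where Ω_{α,β}^{(l,γ)}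 = Σ_{i=0}^l (−1)^i C(l,i) L_{α−iγ} L_{β+iγ}. -/
/-!
Expand each summand `L_{α-iγ} L_{β+iγ}` of `Ω` separately. Commuting `W_t` through `L_a L_b`
produces terms `W L_a`, `W L_b` and a scalar multiple of `W_{a+b+t}`. In the six-term combination
the `W L_a` and the scalar terms cancel, while the `W L_b` terms add up to `2γ` times a second
difference in `i`. Summed against `(-1)^i C(l,i)`, Pascal's rule applied twice turns these second
differences into the alternating sum with coefficients `C(l+2,i)`.
-/

/-- The operator `Ω_{α,β}^{(l,γ)} = Σ_{i=0}^l (−1)^i C(l,i) L_{α−iγ} L_{β+iγ}`. -/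
noncomputable def Omega {k : ℕ} {M : Type*} [AddCommGroup M] [Module ℂ M]
    (Lop : (Fin k → ℤ) → Module.End ℂ M) (l : ℕ) (α β γ : Fin k → ℤ) :
    Module.End ℂ M :=
  ∑ i ∈ Finset.range (l + 1),
    ((-1 : ℂ) ^ i * (l.choose i)) • (Lop (α - i • γ) * Lop (β + i • γ))

open Finset

section Commutators

variable {A R : Type*} [AddCommGroup A] [Ring R] [Algebra ℂ R]
  (ε : A →+ ℂ) (L W : A → R)
  (hLW : ∀ a b : A, ⁅L a, W b⁆ = (ε b - ε a) • W (a + b))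
include hLW

theorem lie_mul_eq (a b t : A) :
    ⁅L a * L b, W t⁆ =
      (ε t - ε b) • (W (b + t) * L a)
      + ((ε t - ε b) * (ε (b + t) - ε a)) • W (a + b + t)
      + (ε t - ε a) • (W (a + t) * L b) := by
  have hprod : ⁅L a * L b, W t⁆ = L a * ⁅L b, W t⁆ + ⁅L a, W t⁆ * L b := by
    simp only [Ring.lie_def]; noncomm_ring
  have hswap : L a * W (b + t) = W (b + t) * L a + ⁅L a, W (b + t)⁆ := by
    rw [Ring.lie_def]; abel
  rw [hprod, hLW, hLW, mul_smul_comm, hswap, hLW, smul_mul_assoc, ← add_assoc a]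
  module

theorem lie_mul_comb_eq_second_diff (α β s γ : A) (m : ℤ) :
    ⁅L (α - m • γ) * L (β - γ + m • γ), W (s + γ)⁆
      - (2 : ℂ) • ⁅L (α - m • γ) * L (β + m • γ), W s⁆
      + ⁅L (α - m • γ) * L (β + γ + m • γ), W (s - γ)⁆
      - ⁅L (α + γ - m • γ) * L (β - γ + m • γ), W s⁆
      + (2 : ℂ) • ⁅L (α + γ - m • γ) * L (β + m • γ), W (s - γ)⁆
      - ⁅L (α + γ - m • γ) * L (β + γ + m • γ), W (s - (2 : ℤ) • γ)⁆
    = (2 * ε γ) • (W (α + s - (m - 1) • γ) * L (β + (m - 1) • γ)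
        - (2 : ℂ) • (W (α + s - m • γ) * L (β + m • γ))
        + W (α + s - (m + 1) • γ) * L (β + (m + 1) • γ)) := by
  simp only [lie_mul_eq ε L W hLW, sub_smul, add_smul, one_smul]
  -- normalise the indices, so that equal operators `W x`, `L y` become equal atoms
  abel_nf
  simp only [map_add, map_zsmul]
  module

end Commutators

theorem Omega_lie {k : ℕ} {M : Type*} [AddCommGroup M] [Module ℂ M]
    (L : (Fin k → ℤ) → Module.End ℂ M) (l : ℕ) (a b γ : Fin k → ℤ) (X : Module.End ℂ M) :
    ⁅Omega L l a b γ, X⁆ = ∑ i ∈ range (l + 1),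
      ((-1 : ℂ) ^ i * l.choose i) • ⁅L (a - i • γ) * L (b + i • γ), X⁆ := by
  simp only [Omega, Ring.lie_def, sum_mul, mul_sum, ← sum_sub_distrib, smul_mul_assoc,
    mul_smul_comm, smul_sub]

section AlternatingSums

variable {S V : Type*} [CommRing S] [AddCommGroup V] [Module S V]

theorem sum_range_alternating_choose_succ_smul (n : ℕ) (f : ℕ → V) :
    ∑ i ∈ range (n + 2), ((-1 : S) ^ i * (n + 1).choose i) • f i
      = ∑ i ∈ range (n + 1), ((-1 : S) ^ i * n.choose i) • (f i - f (i + 1)) := by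
  have hpascal : ∀ i, ((-1 : S) ^ (i + 1) * (n + 1).choose (i + 1)) • f (i + 1)
      = ((-1 : S) ^ (i + 1) * n.choose (i + 1)) • f (i + 1)
        - ((-1 : S) ^ i * n.choose i) • f (i + 1) := by
    intro i
    rw [Nat.choose_succ_succ', Nat.cast_add, pow_succ]
    module
  have hshift : ∑ i ∈ range (n + 1), ((-1 : S) ^ (i + 1) * n.choose (i + 1)) • f (i + 1) + f 0
      = ∑ i ∈ range (n + 1), ((-1 : S) ^ i * n.choose i) • f i := by
    have h := sum_range_succ' (fun i => ((-1 : S) ^ i * n.choose i) • f i) (n + 1)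
    rw [sum_range_succ, Nat.choose_succ_self] at h
    simpa using h.symm
  rw [sum_range_succ', sum_congr rfl fun i _ => hpascal i, sum_sub_distrib, sub_add_eq_add_sub,
    pow_zero, Nat.choose_zero_right, Nat.cast_one, one_mul, one_smul, hshift, ← sum_sub_distrib]
  simp only [smul_sub]

theorem sum_range_alternating_choose_add_two_smul (n : ℕ) (f : ℕ → V) :
    ∑ i ∈ range (n + 3), ((-1 : S) ^ i * (n + 2).choose i) • f i
      = ∑ i ∈ range (n + 1),
          ((-1 : S) ^ i * n.choose i) • (f i - (2 : S) • f (i + 1) + f (i + 2)) := by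
  rw [sum_range_alternating_choose_succ_smul, sum_range_alternating_choose_succ_smul]
  refine sum_congr rfl fun i _ => ?_
  module

end AlternatingSums

theorem stmt9_general (k : ℕ) (ε : (Fin k → ℤ) →+ ℂ)
    (M : Type*) [AddCommGroup M] [Module ℂ M]
    (Lop Wop : (Fin k → ℤ) → Module.End ℂ M)
    (hLW : ∀ a b : Fin k → ℤ, ⁅Lop a, Wop b⁆ = (ε b - ε a) • Wop (a + b))
    (l : ℕ) (α β s γ : Fin k → ℤ) :
    ⁅Omega Lop l α (β - γ) γ, Wop (s + γ)⁆
      - (2 : ℂ) • ⁅Omega Lop l α β γ, Wop s⁆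
      + ⁅Omega Lop l α (β + γ) γ, Wop (s - γ)⁆
      - ⁅Omega Lop l (α + γ) (β - γ) γ, Wop s⁆
      + (2 : ℂ) • ⁅Omega Lop l (α + γ) β γ, Wop (s - γ)⁆
      - ⁅Omega Lop l (α + γ) (β + γ) γ, Wop (s - (2 : ℤ) • γ)⁆
    = (2 * ε γ) • ∑ i ∈ Finset.range (l + 3),
        ((-1 : ℂ) ^ i * ((l + 2).choose i)) •
          (Wop (α + s - ((i : ℤ) - 1) • γ) * Lop (β + ((i : ℤ) - 1) • γ)) := by
  rw [sum_range_alternating_choose_add_two_smul, smul_sum]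
  simp only [Omega_lie, smul_sum, ← sum_sub_distrib, ← sum_add_distrib]
  refine sum_congr rfl fun i _ => ?_
  have hcast : ((i + 2 : ℕ) : ℤ) - 1 = i + 1 := by push_cast; ring
  rw [hcast, Nat.cast_succ, add_sub_cancel_right, smul_comm (2 * ε γ),
    ← lie_mul_comb_eq_second_diff ε Lop Wop hLW α β s γ i]
  simp only [natCast_zsmul]
  module

/-- in the universal enveloping algebra of the centerless high rank
`W(2,2)` (equivalently, as an operator identity on any module `M` with operators
`Lop, Wop` satisfying the bracket relations), for any `α, β, s ∈ ℤᵏ` and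
`γ ∈ ℤᵏ∖{0}`:
`[Ω_{α,β−γ}^{(l,γ)}, W_{s+γ}] − 2[Ω_{α,β}^{(l,γ)}, W_s] + [Ω_{α,β+γ}^{(l,γ)}, W_{s−γ}]
 − [Ω_{α+γ,β−γ}^{(l,γ)}, W_s] + 2[Ω_{α+γ,β}^{(l,γ)}, W_{s−γ}]
 − [Ω_{α+γ,β+γ}^{(l,γ)}, W_{s−2γ}]
 = 2γ · Σ_{i=0}^{l+2} (−1)^i C(l+2,i) W_{α+s−(i−1)γ} L_{β+(i−1)γ}`,
where the scalar `2γ` is `2 ε(γ)` under the embedding `ε : ℤᵏ →+ ℂ`. -/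
theorem stmt9 (k : ℕ) (ε : (Fin k → ℤ) →+ ℂ) (hε : Function.Injective ε)
    (M : Type*) [AddCommGroup M] [Module ℂ M]
    (Lop Wop : (Fin k → ℤ) → Module.End ℂ M)
    (hLL : ∀ a b : Fin k → ℤ, ⁅Lop a, Lop b⁆ = (ε b - ε a) • Lop (a + b))
    (hLW : ∀ a b : Fin k → ℤ, ⁅Lop a, Wop b⁆ = (ε b - ε a) • Wop (a + b))
    (hWW : ∀ a b : Fin k → ℤ, ⁅Wop a, Wop b⁆ = 0)
    (l : ℕ) (α β s γ : Fin k → ℤ) (hγ : γ ≠ 0) :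
    ⁅Omega Lop l α (β - γ) γ, Wop (s + γ)⁆
      - (2 : ℂ) • ⁅Omega Lop l α β γ, Wop s⁆
      + ⁅Omega Lop l α (β + γ) γ, Wop (s - γ)⁆
      - ⁅Omega Lop l (α + γ) (β - γ) γ, Wop s⁆
      + (2 : ℂ) • ⁅Omega Lop l (α + γ) β γ, Wop (s - γ)⁆
      - ⁅Omega Lop l (α + γ) (β + γ) γ, Wop (s - (2 : ℤ) • γ)⁆
    = (2 * ε γ) • ∑ i ∈ Finset.range (l + 3),
        ((-1 : ℂ) ^ i * ((l + 2).choose i)) •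
          (Wop (α + s - ((i : ℤ) - 1) • γ) * Lop (β + ((i : ℤ) - 1) • γ)) :=
  stmt9_general k ε M Lop Wop hLW l α β s γ
end

section
/- Let M be a cuspidal module over the centerless classical or high rank W-algebra W(2,2) (i.e., over its Virasoro subalgebra the hypothesis of Billig's lemma holds): if there exists l ∈ ℤ₊ such that Ω_{α,β}^{(l,γ)} = Σ_{i=0}^l (−1)^i C(l,i) L_{α−iγ}L_{β+iγ} annihilates M for all α,β,γ ∈ ℤᵏ, then with r = l+2, the operator Ω̃_{α,β}^{(r,γ)} = Σ_{i=0}^r (−1)^i C(r,i) W_{α−iγ}L_{β+iγ} annihilates M for all α, β, γ ∈ ℤᵏ. -/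
open Finset

/-- The operator `Ω̃_{α,β}^{(r,γ)} = Σ_{i=0}^r (−1)^i C(r,i) W_{α−iγ} L_{β+iγ}`. -/
noncomputable def OmegaTilde {k : ℕ} {M : Type*} [AddCommGroup M] [Module ℂ M]
    (Lop Wop : (Fin k → ℤ) → Module.End ℂ M) (r : ℕ) (α β γ : Fin k → ℤ) :
    Module.End ℂ M :=
  ∑ i ∈ Finset.range (r + 1),
    ((-1 : ℂ) ^ i * (r.choose i)) • (Wop (α - i • γ) * Lop (β + i • γ))

private lemma altsum (m : ℕ) (hm : m ≠ 0) :
    ∑ i ∈ Finset.range (m+1), ((-1:ℂ)^i * (m.choose i)) = 0 := by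
  have h := add_pow (-1 : ℂ) 1 m
  simp only [neg_add_cancel, one_pow, mul_one, zero_pow hm] at h
  exact h.symm

private lemma pascal_step {V : Type*} [AddCommGroup V] [Module ℂ V] (m : ℕ) (g : ℕ → V) :
    ∑ i ∈ Finset.range (m+2), ((-1:ℂ)^i * ((m+1).choose i)) • g i
      = ∑ i ∈ Finset.range (m+1), ((-1:ℂ)^i * (m.choose i)) • g i
        - ∑ i ∈ Finset.range (m+1), ((-1:ℂ)^i * (m.choose i)) • g (i+1) := by
  rw [Finset.sum_range_succ' (fun i => ((-1:ℂ)^i * ((m+1).choose i)) • g i) (m+1)]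
  have hsplit : ∀ i, ((-1:ℂ)^(i+1) * (((m+1).choose (i+1) : ℕ):ℂ)) • g (i+1)
      = -(((-1:ℂ)^i * (m.choose i)) • g (i+1)) + ((-1:ℂ)^(i+1) * ((m.choose (i+1) : ℕ):ℂ)) • g (i+1) := by
    intro i
    rw [← neg_smul, ← add_smul]
    congr 1
    rw [Nat.choose_succ_succ]
    push_cast
    ring
  rw [Finset.sum_congr rfl fun i _ => hsplit i, Finset.sum_add_distrib]
  have h2 : ∑ i ∈ Finset.range (m+1), ((-1:ℂ)^(i+1) * ((m.choose (i+1) : ℕ):ℂ)) • g (i+1)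
      = ∑ i ∈ Finset.range (m+2), ((-1:ℂ)^i * ((m.choose i : ℕ):ℂ)) • g i
        - ((-1:ℂ)^0 * ((m.choose 0 : ℕ):ℂ)) • g 0 := by
    rw [Finset.sum_range_succ' (fun i => ((-1:ℂ)^i * ((m.choose i : ℕ):ℂ)) • g i) (m+1)]
    abel
  rw [h2]
  rw [Finset.sum_range_succ (fun i => ((-1:ℂ)^i * ((m.choose i : ℕ):ℂ)) • g i) (m+1)]
  rw [Nat.choose_eq_zero_of_lt (by omega)]
  simp only [Nat.cast_zero, mul_zero, zero_smul, add_zero, Nat.choose_zero_right,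
    Nat.cast_one, mul_one, pow_zero, one_smul]
  rw [Finset.sum_neg_distrib]
  abel

private lemma wl_congr {k : ℕ} {M : Type*} [AddCommGroup M] [Module ℂ M]
    (Lop Wop : (Fin k → ℤ) → Module.End ℂ M) (u : M) {a a' : ℂ} {A A' B B' : Fin k → ℤ}
    (ha : a = a') (hA : A = A') (hB : B = B') :
    a • Wop A (Lop B u) = a' • Wop A' (Lop B' u) := by
  subst ha; subst hA; subst hB; rfl

private lemma glue {V : Type*} [AddCommGroup V] (A1 B1 A2 B2 A3 B3 G1 G2 P W Y : V)
    (hA : A1 + A2 + A3 = 0) (hB : B1 + B2 + B3 = 0)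
    (e1 : A1 - B1 = G1 - G2 + W) (e2 : A2 - B2 = Y) (e3 : A3 - B3 = 0)
    (hp : P = G2 - G1) : P = W + Y := by
  have h0 : (A1 + A2 + A3) - (B1 + B2 + B3) = 0 := by rw [hA, hB, sub_zero]
  rw [hp]
  calc G2 - G1 = -(G1 - G2 + W) + W := by abel
  _ = -(A1 - B1) + W := by rw [e1]
  _ = (A2 - B2) + (A3 - B3) - ((A1+A2+A3) - (B1+B2+B3)) + W := by abel
  _ = Y + 0 - 0 + W := by rw [e2, e3, h0]
  _ = W + Y := by abel

private lemma main_aux {k : ℕ} {M : Type*} [AddCommGroup M] [Module ℂ M]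
    (ε : (Fin k → ℤ) →+ ℂ)
    (Lop Wop : (Fin k → ℤ) → Module.End ℂ M)
    (hLW : ∀ a b : Fin k → ℤ, ⁅Lop a, Wop b⁆ = (ε b - ε a) • Wop (a + b))
    (l : ℕ) (hl : l ≠ 0)
    (hann : ∀ α β γ : Fin k → ℤ, ∀ v : M, Omega Lop l α β γ v = 0)
    (γ : Fin k → ℤ) (hc : ε γ ≠ 0) :
    ∀ μ ν : Fin k → ℤ, ∀ v : M,
      ∑ i ∈ Finset.range (l+3), ((-1:ℂ)^i * ((l+2).choose i)) • Wop (μ + i • γ) (Lop (ν - i • γ) v) = 0 := by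
  have epsmul : ∀ (i : ℕ) (a : Fin k → ℤ), ε (i • a) = (i:ℂ) * ε a := fun i a => by
    rw [map_nsmul, nsmul_eq_mul]
  have hswap : ∀ a b (u : M), Lop a (Wop b u) = Wop b (Lop a u) + (ε b - ε a) • Wop (a+b) u := by
    intro a b u
    have h := hLW a b
    rw [Ring.lie_def] at h
    have h2 := DFunLike.congr_fun h u
    simp only [LinearMap.sub_apply, Module.End.mul_apply, LinearMap.smul_apply] at h2
    exact sub_eq_iff_eq_add'.mp h2
  have key : ∀ (a b s : Fin k → ℤ) (u : M),
      Lop a (Lop b (Wop s u)) - Wop s (Lop a (Lop b u))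
        = (ε s - ε b) • Wop (b+s) (Lop a u) + (ε s - ε a) • Wop (a+s) (Lop b u)
          + ((ε s - ε b)*(ε (b+s) - ε a)) • Wop (a+(b+s)) u := by
    intro a b s u
    rw [hswap b s u, map_add, map_smul, hswap a s (Lop b u), hswap a (b+s) u]
    module
  have hann' : ∀ α β s (u : M), ∑ i ∈ Finset.range (l+1), ((-1:ℂ)^i * (l.choose i)) •
      (Lop (α - i•γ) (Lop (β + i•γ) (Wop s u)) - Wop s (Lop (α - i•γ) (Lop (β + i•γ) u))) = 0 := by
    intro α β s u
    have h1 := hann α β γ (Wop s u)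
    have h2 := hann α β γ u
    simp only [Omega, LinearMap.sum_apply, LinearMap.smul_apply, Module.End.mul_apply] at h1 h2
    simp only [smul_sub]
    rw [Finset.sum_sub_distrib, h1]
    have h3 : ∑ i ∈ Finset.range (l+1), ((-1:ℂ)^i * (l.choose i)) • Wop s (Lop (α - i•γ) (Lop (β + i•γ) u))
        = Wop s (∑ i ∈ Finset.range (l+1), ((-1:ℂ)^i * (l.choose i)) • (Lop (α - i•γ) (Lop (β + i•γ) u))) := by
      rw [map_sum]
      exact Finset.sum_congr rfl fun i _ => (map_smul _ _ _).symm
    rw [h3, h2, map_zero, sub_zero]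
  have hP : ∀ α β s (u : M),
      (∑ i ∈ Finset.range (l+1), (((-1:ℂ)^i * (l.choose i)) * (ε s - ε β - i*ε γ)) • Wop (β+s+i•γ) (Lop (α-i•γ) u))
      + (∑ i ∈ Finset.range (l+1), (((-1:ℂ)^i * (l.choose i)) * (ε s - ε α + i*ε γ)) • Wop (α+s-i•γ) (Lop (β+i•γ) u))
      + (∑ i ∈ Finset.range (l+1), (((-1:ℂ)^i * (l.choose i)) * ((ε s - ε β - i*ε γ)*(ε β + ε s - ε α + 2*i*ε γ))) • Wop (α+β+s) u) = 0 := by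
    intro α β s u
    rw [← hann' α β s u, ← Finset.sum_add_distrib, ← Finset.sum_add_distrib]
    refine Finset.sum_congr rfl fun i _ => ?_
    rw [key (α - i•γ) (β + i•γ) s u]
    rw [smul_add, smul_add, smul_smul, smul_smul, smul_smul]
    have e1 : (((-1:ℂ)^i * (l.choose i)) * (ε s - ε (β+i•γ))) • Wop ((β+i•γ)+s) (Lop (α - i•γ) u)
        = (((-1:ℂ)^i * (l.choose i)) * (ε s - ε β - i*ε γ)) • Wop (β+s+i•γ) (Lop (α-i•γ) u) :=
      wl_congr Lop Wop u (by rw [map_add, epsmul]; ring) (by abel) rfl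
    have e2 : (((-1:ℂ)^i * (l.choose i)) * (ε s - ε (α-i•γ))) • Wop ((α-i•γ)+s) (Lop (β+i•γ) u)
        = (((-1:ℂ)^i * (l.choose i)) * (ε s - ε α + i*ε γ)) • Wop (α+s-i•γ) (Lop (β+i•γ) u) :=
      wl_congr Lop Wop u (by rw [map_sub, epsmul]; ring) (by abel) rfl
    have e3 : (((-1:ℂ)^i * (l.choose i)) * ((ε s - ε (β+i•γ)) * (ε ((β+i•γ)+s) - ε (α-i•γ)))) • Wop ((α-i•γ)+((β+i•γ)+s)) u
        = (((-1:ℂ)^i * (l.choose i)) * ((ε s - ε β - i*ε γ)*(ε β + ε s - ε α + 2*i*ε γ))) • Wop (α+β+s) u := by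
      have hA : ((α-i•γ)+((β+i•γ)+s)) = α+β+s := by abel
      rw [hA]
      congr 1
      simp only [map_add, map_sub, epsmul]
      ring
    rw [e1, e2, e3]
  -- Step D1 : the six-term identity, after cancelling the scalar (γ=0-style) part
  have hQ : ∀ α β s (u : M),
      (∑ i ∈ Finset.range (l+2), ((-1:ℂ)^i * ((l+1).choose i)) •
          ((ε s - ε β - ε γ - i*ε γ) • Wop (β+s-γ+i•γ) (Lop (α+γ-i•γ) u)))
      = (2*ε γ) • (∑ i ∈ Finset.range (l+1), ((-1:ℂ)^i * (l.choose i)) • Wop (β+s+i•γ) (Lop (α-i•γ) u))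
        + (2*ε γ) • (∑ i ∈ Finset.range (l+1), ((-1:ℂ)^i * (l.choose i)) • Wop (α+s-i•γ) (Lop (β+i•γ) u)) := by
    intro α β s u
    have hA := hP α β s u
    have hB := hP (α+γ) β (s-γ) u
    have e1 : (∑ i ∈ Finset.range (l+1), (((-1:ℂ)^i * (l.choose i)) * (ε s - ε β - i*ε γ)) • Wop (β+s+i•γ) (Lop (α-i•γ) u))
        - (∑ i ∈ Finset.range (l+1), (((-1:ℂ)^i * (l.choose i)) * (ε (s-γ) - ε β - i*ε γ)) • Wop (β+(s-γ)+i•γ) (Lop ((α+γ)-i•γ) u))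
        = (∑ i ∈ Finset.range (l+1), ((-1:ℂ)^i * (l.choose i)) •
              ((ε s - ε β - ε γ - ((i+1 : ℕ):ℂ)*ε γ) • Wop (β+s-γ+(i+1)•γ) (Lop (α+γ-(i+1)•γ) u)))
          - (∑ i ∈ Finset.range (l+1), ((-1:ℂ)^i * (l.choose i)) •
              ((ε s - ε β - ε γ - (i:ℂ)*ε γ) • Wop (β+s-γ+i•γ) (Lop (α+γ-i•γ) u)))
          + (2*ε γ) • (∑ i ∈ Finset.range (l+1), ((-1:ℂ)^i * (l.choose i)) • Wop (β+s+i•γ) (Lop (α-i•γ) u)) := by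
      rw [Finset.smul_sum, ← Finset.sum_sub_distrib, ← Finset.sum_sub_distrib, ← Finset.sum_add_distrib]
      refine Finset.sum_congr rfl fun i _ => ?_
      rw [smul_smul, smul_smul, smul_smul]
      have eg1 : (((-1:ℂ)^i * (l.choose i)) * (ε s - ε β - ε γ - ((i+1 : ℕ):ℂ)*ε γ)) • Wop (β+s-γ+(i+1)•γ) (Lop (α+γ-(i+1)•γ) u)
          = (((-1:ℂ)^i * (l.choose i)) * (ε s - ε β - 2*ε γ - (i:ℂ)*ε γ)) • Wop (β+s+i•γ) (Lop (α-i•γ) u) :=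
        wl_congr Lop Wop u (by push_cast; ring) (by rw [succ_nsmul]; abel) (by rw [succ_nsmul]; abel)
      have eg2 : (((-1:ℂ)^i * (l.choose i)) * (ε (s-γ) - ε β - (i:ℂ)*ε γ)) • Wop (β+(s-γ)+i•γ) (Lop ((α+γ)-i•γ) u)
          = (((-1:ℂ)^i * (l.choose i)) * (ε s - ε β - ε γ - (i:ℂ)*ε γ)) • Wop (β+s-γ+i•γ) (Lop (α+γ-i•γ) u) :=
        wl_congr Lop Wop u (by rw [map_sub]; ring) (by abel) rfl
      have hA1i : (((-1:ℂ)^i * (l.choose i)) * (ε s - ε β - i*ε γ)) • Wop (β+s+i•γ) (Lop (α-i•γ) u)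
          = (((-1:ℂ)^i * (l.choose i)) * (ε s - ε β - 2*ε γ - (i:ℂ)*ε γ)) • Wop (β+s+i•γ) (Lop (α-i•γ) u)
            + ((2*ε γ) * ((-1:ℂ)^i * (l.choose i))) • Wop (β+s+i•γ) (Lop (α-i•γ) u) := by
        rw [← add_smul]
        exact wl_congr Lop Wop u (by ring) rfl rfl
      rw [eg1, ← eg2, hA1i]
      abel
    have e2 : (∑ i ∈ Finset.range (l+1), (((-1:ℂ)^i * (l.choose i)) * (ε s - ε α + i*ε γ)) • Wop (α+s-i•γ) (Lop (β+i•γ) u))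
        - (∑ i ∈ Finset.range (l+1), (((-1:ℂ)^i * (l.choose i)) * (ε (s-γ) - ε (α+γ) + i*ε γ)) • Wop ((α+γ)+(s-γ)-i•γ) (Lop (β+i•γ) u))
        = (2*ε γ) • (∑ i ∈ Finset.range (l+1), ((-1:ℂ)^i * (l.choose i)) • Wop (α+s-i•γ) (Lop (β+i•γ) u)) := by
      rw [Finset.smul_sum, ← Finset.sum_sub_distrib]
      refine Finset.sum_congr rfl fun i _ => ?_
      rw [smul_smul]
      have ew : (((-1:ℂ)^i * (l.choose i)) * (ε (s-γ) - ε (α+γ) + (i:ℂ)*ε γ)) • Wop ((α+γ)+(s-γ)-i•γ) (Lop (β+i•γ) u)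
          = (((-1:ℂ)^i * (l.choose i)) * (ε s - ε α - 2*ε γ + (i:ℂ)*ε γ)) • Wop (α+s-i•γ) (Lop (β+i•γ) u) :=
        wl_congr Lop Wop u (by rw [map_sub, map_add]; ring) (by abel) rfl
      rw [ew, ← sub_smul]
      exact wl_congr Lop Wop u (by ring) rfl rfl
    have e3 : (∑ i ∈ Finset.range (l+1), (((-1:ℂ)^i * (l.choose i)) * ((ε s - ε β - i*ε γ)*(ε β + ε s - ε α + 2*i*ε γ))) • Wop (α+β+s) u)
        - (∑ i ∈ Finset.range (l+1), (((-1:ℂ)^i * (l.choose i)) * ((ε (s-γ) - ε β - i*ε γ)*(ε β + ε (s-γ) - ε (α+γ) + 2*i*ε γ))) • Wop ((α+γ)+β+(s-γ)) u)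
        = 0 := by
      rw [← Finset.sum_sub_distrib]
      have e3' : ∀ i ∈ Finset.range (l+1),
          (((-1:ℂ)^i * (l.choose i)) * ((ε s - ε β - i*ε γ)*(ε β + ε s - ε α + 2*i*ε γ))) • Wop (α+β+s) u
          - (((-1:ℂ)^i * (l.choose i)) * ((ε (s-γ) - ε β - i*ε γ)*(ε β + ε (s-γ) - ε (α+γ) + 2*i*ε γ))) • Wop ((α+γ)+β+(s-γ)) u
          = ((-1:ℂ)^i * (l.choose i)) • ((ε γ * (3*ε s - ε α - ε β - 2*ε γ)) • Wop (α+β+s) u) := by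
        intro i _
        have hidx : ((α+γ)+β+(s-γ)) = α+β+s := by abel
        rw [hidx, ← sub_smul, smul_smul]
        congr 1
        simp only [map_sub, map_add]
        ring
      rw [Finset.sum_congr rfl e3', ← Finset.sum_smul, altsum l hl, zero_smul]
    have hp : (∑ i ∈ Finset.range (l+2), ((-1:ℂ)^i * ((l+1).choose i)) •
          ((ε s - ε β - ε γ - i*ε γ) • Wop (β+s-γ+i•γ) (Lop (α+γ-i•γ) u)))
        = (∑ i ∈ Finset.range (l+1), ((-1:ℂ)^i * (l.choose i)) •
              ((ε s - ε β - ε γ - (i:ℂ)*ε γ) • Wop (β+s-γ+i•γ) (Lop (α+γ-i•γ) u)))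
          - (∑ i ∈ Finset.range (l+1), ((-1:ℂ)^i * (l.choose i)) •
              ((ε s - ε β - ε γ - ((i+1 : ℕ):ℂ)*ε γ) • Wop (β+s-γ+(i+1)•γ) (Lop (α+γ-(i+1)•γ) u))) :=
      pascal_step l fun j : ℕ => (ε s - ε β - ε γ - (j:ℂ)*ε γ) • Wop (β+s-γ+j•γ) (Lop (α+γ-j•γ) u)
    exact glue _ _ _ _ _ _ _ _ _ _ _ hA hB e1 e2 e3 hp
  -- Step D2
  have hR : ∀ α β s (u : M),
      ∑ i ∈ Finset.range (l+2), ((-1:ℂ)^i * ((l+1).choose i)) • Wop (β+s-γ+i•γ) (Lop (α+γ-i•γ) u)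
      = ∑ i ∈ Finset.range (l+2), ((-1:ℂ)^i * ((l+1).choose i)) • Wop (α+s-i•γ) (Lop (β+i•γ) u) := by
    intro α β s u
    have hA := hQ α β s u
    have hB := hQ α (β+γ) (s-γ) u
    have h2c : (2 * ε γ) ≠ 0 := mul_ne_zero two_ne_zero hc
    apply smul_right_injective M h2c
    have eL : (∑ i ∈ Finset.range (l+2), ((-1:ℂ)^i * ((l+1).choose i)) •
          ((ε s - ε β - ε γ - i*ε γ) • Wop (β+s-γ+i•γ) (Lop (α+γ-i•γ) u)))
        - (∑ i ∈ Finset.range (l+2), ((-1:ℂ)^i * ((l+1).choose i)) •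
          ((ε (s-γ) - ε (β+γ) - ε γ - i*ε γ) • Wop ((β+γ)+(s-γ)-γ+i•γ) (Lop (α+γ-i•γ) u)))
        = (2*ε γ) • ∑ i ∈ Finset.range (l+2), ((-1:ℂ)^i * ((l+1).choose i)) • Wop (β+s-γ+i•γ) (Lop (α+γ-i•γ) u) := by
      rw [Finset.smul_sum, ← Finset.sum_sub_distrib]
      refine Finset.sum_congr rfl fun i _ => ?_
      rw [smul_smul, smul_smul, smul_smul]
      have e' : (((-1:ℂ)^i * ((l+1).choose i)) * (ε (s-γ) - ε (β+γ) - ε γ - i*ε γ)) • Wop ((β+γ)+(s-γ)-γ+i•γ) (Lop (α+γ-i•γ) u)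
          = (((-1:ℂ)^i * ((l+1).choose i)) * (ε s - ε β - 3*ε γ - i*ε γ)) • Wop (β+s-γ+i•γ) (Lop (α+γ-i•γ) u) :=
        wl_congr Lop Wop u (by simp only [map_sub, map_add]; ring) (by abel) rfl
      rw [e', ← sub_smul]
      exact wl_congr Lop Wop u (by ring) rfl rfl
    have eW : (∑ i ∈ Finset.range (l+1), ((-1:ℂ)^i * (l.choose i)) • Wop ((β+γ)+(s-γ)+i•γ) (Lop (α-i•γ) u))
        = ∑ i ∈ Finset.range (l+1), ((-1:ℂ)^i * (l.choose i)) • Wop (β+s+i•γ) (Lop (α-i•γ) u) :=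
      Finset.sum_congr rfl fun i _ => wl_congr Lop Wop u rfl (by abel) rfl
    have eY : (∑ i ∈ Finset.range (l+1), ((-1:ℂ)^i * (l.choose i)) • Wop (α+(s-γ)-i•γ) (Lop ((β+γ)+i•γ) u))
        = ∑ i ∈ Finset.range (l+1), ((-1:ℂ)^i * (l.choose i)) • Wop (α+s-(i+1)•γ) (Lop (β+(i+1)•γ) u) :=
      Finset.sum_congr rfl fun i _ =>
        wl_congr Lop Wop u rfl (by rw [succ_nsmul]; abel) (by rw [succ_nsmul]; abel)
    have hp := pascal_step l (fun j : ℕ => Wop (α+s-j•γ) (Lop (β+j•γ) u))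
    calc (2*ε γ) • ∑ i ∈ Finset.range (l+2), ((-1:ℂ)^i * ((l+1).choose i)) • Wop (β+s-γ+i•γ) (Lop (α+γ-i•γ) u)
        = _ - _ := eL.symm
      _ = ((2*ε γ) • (∑ i ∈ Finset.range (l+1), ((-1:ℂ)^i * (l.choose i)) • Wop (β+s+i•γ) (Lop (α-i•γ) u))
            + (2*ε γ) • (∑ i ∈ Finset.range (l+1), ((-1:ℂ)^i * (l.choose i)) • Wop (α+s-i•γ) (Lop (β+i•γ) u)))
          - ((2*ε γ) • (∑ i ∈ Finset.range (l+1), ((-1:ℂ)^i * (l.choose i)) • Wop ((β+γ)+(s-γ)+i•γ) (Lop (α-i•γ) u))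
            + (2*ε γ) • (∑ i ∈ Finset.range (l+1), ((-1:ℂ)^i * (l.choose i)) • Wop (α+(s-γ)-i•γ) (Lop ((β+γ)+i•γ) u))) := by
          rw [hA, hB]
      _ = (2*ε γ) • ((∑ i ∈ Finset.range (l+1), ((-1:ℂ)^i * (l.choose i)) • Wop (α+s-i•γ) (Lop (β+i•γ) u))
            - ∑ i ∈ Finset.range (l+1), ((-1:ℂ)^i * (l.choose i)) • Wop (α+s-(i+1)•γ) (Lop (β+(i+1)•γ) u)) := by
          rw [eW, eY, smul_sub]; abel
      _ = (2*ε γ) • ∑ i ∈ Finset.range (l+2), ((-1:ℂ)^i * ((l+1).choose i)) • Wop (α+s-i•γ) (Lop (β+i•γ) u) := by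
          rw [hp]
  -- Step D3
  have hH : ∀ α β s (u : M),
      ∑ i ∈ Finset.range (l+3), ((-1:ℂ)^i * ((l+2).choose i)) • Wop (β+(s-γ)-γ+i•γ) (Lop ((α+γ)+γ-i•γ) u) = 0 := by
    intro α β s u
    have hA := hR α β s u
    have hB := hR (α+γ) β (s-γ) u
    have hp := pascal_step (l+1) (fun j : ℕ => Wop (β+(s-γ)-γ+j•γ) (Lop ((α+γ)+γ-j•γ) u))
    have eP : (∑ i ∈ Finset.range (l+2), ((-1:ℂ)^i * ((l+1).choose i)) • Wop (β+(s-γ)-γ+(i+1)•γ) (Lop ((α+γ)+γ-(i+1)•γ) u))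
        = ∑ i ∈ Finset.range (l+2), ((-1:ℂ)^i * ((l+1).choose i)) • Wop (β+s-γ+i•γ) (Lop (α+γ-i•γ) u) :=
      Finset.sum_congr rfl fun i _ =>
        wl_congr Lop Wop u rfl (by rw [succ_nsmul]; abel) (by rw [succ_nsmul]; abel)
    have eR : (∑ i ∈ Finset.range (l+2), ((-1:ℂ)^i * ((l+1).choose i)) • Wop ((α+γ)+(s-γ)-i•γ) (Lop (β+i•γ) u))
        = ∑ i ∈ Finset.range (l+2), ((-1:ℂ)^i * ((l+1).choose i)) • Wop (α+s-i•γ) (Lop (β+i•γ) u) :=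
      Finset.sum_congr rfl fun i _ => wl_congr Lop Wop u rfl (by abel) rfl
    rw [hp, eP, hA, hB, eR]
    abel
  intro μ ν v
  have h := hH (ν - γ - γ) (μ + γ + γ) 0 v
  rw [← h]
  refine Finset.sum_congr rfl fun i _ => wl_congr Lop Wop v rfl (by abel) (by abel)

/-- let `M` be a (cuspidal) module over the centerless high rank
`W(2,2)`: if there is `l ∈ ℤ₊` such that `Ω_{α,β}^{(l,γ)}` annihilates `M` for all
`α, β, γ ∈ ℤᵏ`, then with `r = l + 2` the operator `Ω̃_{α,β}^{(r,γ)}` annihilates `M`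
for all `α, β, γ ∈ ℤᵏ`. -/
theorem stmt10 (k : ℕ) (ε : (Fin k → ℤ) →+ ℂ) (hε : Function.Injective ε)
    (M : Type*) [AddCommGroup M] [Module ℂ M]
    (Lop Wop : (Fin k → ℤ) → Module.End ℂ M)
    (hLL : ∀ a b : Fin k → ℤ, ⁅Lop a, Lop b⁆ = (ε b - ε a) • Lop (a + b))
    (hLW : ∀ a b : Fin k → ℤ, ⁅Lop a, Wop b⁆ = (ε b - ε a) • Wop (a + b))
    (hWW : ∀ a b : Fin k → ℤ, ⁅Wop a, Wop b⁆ = 0)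
    (l : ℕ) (hl : 0 < l)
    (hann : ∀ α β γ : Fin k → ℤ, ∀ v : M, Omega Lop l α β γ v = 0) :
    ∀ α β γ : Fin k → ℤ, ∀ v : M, OmegaTilde Lop Wop (l + 2) α β γ v = 0 := by
  intro α β γ v
  rcases eq_or_ne γ 0 with rfl | hγ
  · simp only [OmegaTilde, smul_zero, sub_zero, add_zero, LinearMap.sum_apply,
      LinearMap.smul_apply, Module.End.mul_apply]
    rw [← Finset.sum_smul]
    rw [altsum (l+2) (by omega)]
    simp
  · have hc : ε γ ≠ 0 := fun h => hγ (hε (by simpa using h))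
    have hc' : ε (-γ) ≠ 0 := by simpa using hc
    have H := main_aux ε Lop Wop hLW l (by omega) hann (-γ) hc' α β v
    simp only [OmegaTilde, LinearMap.sum_apply, LinearMap.smul_apply, Module.End.mul_apply]
    rw [← H]
    refine Finset.sum_congr rfl fun i _ => wl_congr Lop Wop v rfl ?_ ?_
    · rw [smul_neg]; abel
    · rw [smul_neg]; abel
end

section
/- Let W be a finite-dimensional vector space, g, h ∈ ℂ, and suppose a module M = A ⊗ W over the centerless high rank W(2,2) satisfies L_α(tⁿ⊗v) = (n + g + hα)(t^{α+n}⊗v) and W_α(tⁿ⊗v) = tⁿ⊗(W_α·v) for some linear maps W_α : W → W. Then the relation (β−α)W_{α+β}(tⁿv) = (L_α W_β − W_β L_α)(tⁿv) forces W_α·v = 0 for all α ∈ ℤᵏ, v ∈ W; i.e., all W_α act as zero on M. -/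
/-- Let `W` be a finite-dimensional vector space, `g, h ∈ ℂ`, and let
`M = A ⊗ W` (modelled as `(Fin k → ℤ) →₀ W`, with `tⁿ ⊗ v = single n v`) be a module
over the centerless high rank `W(2,2)` satisfying
`L_α(tⁿ ⊗ v) = (n + g + hα)(t^{α+n} ⊗ v)` and `W_α(tⁿ ⊗ v) = tⁿ ⊗ (W̄_α v)` for some
linear maps `W̄_α : W → W`. Then the relation
`(β−α) W_{α+β} = [L_α, W_β]` forces `W̄_α v = 0` for all `α, v`; i.e. all `W_α` act
as zero on `M`. Scalars come from the injective embedding `ε : ℤᵏ →+ ℂ`, `k ≥ 1`. -/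
theorem stmt11 (k : ℕ) (hk : 0 < k) (ε : (Fin k → ℤ) →+ ℂ)
    (hε : Function.Injective ε)
    (W : Type*) [AddCommGroup W] [Module ℂ W] [FiniteDimensional ℂ W]
    (g h : ℂ)
    (Lop Wop : (Fin k → ℤ) → Module.End ℂ ((Fin k → ℤ) →₀ W))
    (Wbar : (Fin k → ℤ) → W →ₗ[ℂ] W)
    (hL : ∀ (α n : Fin k → ℤ) (v : W),
      Lop α (Finsupp.single n v) = (ε n + g + h * ε α) • Finsupp.single (α + n) v)
    (hW : ∀ (α n : Fin k → ℤ) (v : W),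
      Wop α (Finsupp.single n v) = Finsupp.single n (Wbar α v))
    (hLW : ∀ α β : Fin k → ℤ, ⁅Lop α, Wop β⁆ = (ε β - ε α) • Wop (α + β)) :
    ∀ (α : Fin k → ℤ) (v : W), Wbar α v = 0 := by

  have key : ∀ (α β : Fin k → ℤ) (v : W), (ε β - ε α) • Wbar (α + β) v = 0 := by
    intro α β v
    have h1 := congrArg (fun f : Module.End ℂ ((Fin k → ℤ) →₀ W) =>
      f (Finsupp.single 0 v)) (hLW α β)
    simp only [Ring.lie_def, LinearMap.sub_apply, Module.End.mul_apply,
      LinearMap.smul_apply, hW, hL, map_smul, sub_self] at h1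
    have h2 := congrArg (fun f : (Fin k → ℤ) →₀ W => f 0) h1
    simpa using h2.symm
  have hε0 : ε 0 = 0 := map_zero ε
  intro γ v
  by_cases hγ : γ = 0
  · subst hγ
    set a : Fin k → ℤ := Pi.single ⟨0, hk⟩ 1 with ha
    have hane : a ≠ 0 := by
      intro hz
      have := congrFun hz ⟨0, hk⟩
      simp [ha] at this
    have hεa : ε a ≠ 0 := fun hz => hane (hε (by rw [hz, hε0]))
    have := key a (-a) v
    rw [add_neg_cancel] at this
    have hc : ε (-a) - ε a ≠ 0 := by
      rw [map_neg]; intro hz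
      apply hεa
      have : (2 : ℂ) * ε a = 0 := by linear_combination -hz
      simpa using this
    exact (smul_eq_zero.mp this).resolve_left hc
  · have := key 0 γ v
    rw [zero_add, hε0, sub_zero] at this
    have hc : ε γ ≠ 0 := fun hz => hγ (hε (by rw [hz, hε0]))
    exact (smul_eq_zero.mp this).resolve_left hc
end
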